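/- arXiv:2602.11816 — 2 statements merged into one kernel-verified Lean document; each statement's English description precedes it below -/
import Mathlib

section
/- Let q be a prime with q > 3 and let n = 3q. Then the metric dimension of the barycentric subdivision of the zero divisor graph of Z_n equals q - 2, i.e. dim(BS(Γ(Z_{3q}))) = q - 2. -/
open SimpleGraph

/-- The nonzero zero-divisors of `ZMod n`. -/
def ZDVert (n : ℕ) : Type :=
  {a : ZMod n // a ≠ 0 ∧ ∃ b : ZMod n, b ≠ 0 ∧ a * b = 0}

/-- The zero-divisor graph of `ZMod n`: vertices are the nonzero zero-divisors,
with distinct vertices adjacent iff their product is zero. -/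
def zdGraph (n : ℕ) : SimpleGraph (ZDVert n) where
  Adj a b := a ≠ b ∧ a.1 * b.1 = 0
  symm := by
    constructor
    rintro a b ⟨hab, h⟩
    exact ⟨hab.symm, by rwa [mul_comm] at h⟩
  loopless := by
    constructor
    rintro a ⟨hne, -⟩
    exact hne rfl

/-- The barycentric subdivision of a simple graph: vertices are the disjoint union
of the original vertices and the edges, an original vertex is adjacent to an
edge-vertex iff it is an endpoint of that edge, and there are no other adjacencies. -/
def BS {V : Type*} (G : SimpleGraph V) : SimpleGraph (V ⊕ G.edgeSet) where
  Adj x y :=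
    (∃ (v : V) (e : G.edgeSet), x = Sum.inl v ∧ y = Sum.inr e ∧ v ∈ e.1) ∨
    (∃ (v : V) (e : G.edgeSet), x = Sum.inr e ∧ y = Sum.inl v ∧ v ∈ e.1)
  symm := by
    constructor
    rintro x y (⟨v, e, rfl, rfl, h⟩ | ⟨v, e, rfl, rfl, h⟩)
    · exact Or.inr ⟨v, e, rfl, rfl, h⟩
    · exact Or.inl ⟨v, e, rfl, rfl, h⟩
  loopless := by
    constructor
    rintro x (⟨v, e, rfl, h, -⟩ | ⟨v, e, rfl, h, -⟩) <;> simp at h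

/-- A set of vertices is resolving if any two distinct vertices are distinguished
by their distance to some vertex of the set. -/
def IsResolving {V : Type*} (G : SimpleGraph V) (W : Set V) : Prop :=
  ∀ x y : V, x ≠ y → ∃ w ∈ W, G.dist x w ≠ G.dist y w

/-- The metric dimension: the least cardinality of a (finite) resolving set. -/
noncomputable def metricDim {V : Type*} (G : SimpleGraph V) : ℕ :=
  sInf {k | ∃ W : Finset V, IsResolving G ↑W ∧ W.card = k}

/-- The independent metric dimension: the least cardinality of a (finite)
resolving set that is also an independent set. -/
noncomputable def indepMetricDim {V : Type*} (G : SimpleGraph V) : ℕ :=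
  sInf {k | ∃ W : Finset V, IsResolving G ↑W ∧
    (∀ a ∈ W, ∀ b ∈ W, ¬ G.Adj a b) ∧ W.card = k}

namespace ZDAux


abbrev MV (m : ℕ) := (Bool ⊕ Fin m) ⊕ (Bool × Fin m)

def MAdj (m : ℕ) : MV m → MV m → Prop := fun x y =>
  match x, y with
  | .inl (.inl a), .inr (b, _) => a = b
  | .inl (.inr i), .inr (_, j) => i = j
  | .inr (b, _), .inl (.inl a) => a = b
  | .inr (_, j), .inl (.inr i) => i = j
  | _, _ => False

def modelG (m : ℕ) : SimpleGraph (MV m) where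
  Adj := MAdj m
  symm := by constructor; rintro (⟨a | i⟩ | ⟨b, j⟩) (⟨a' | i'⟩ | ⟨b', j'⟩) h <;> simp_all [MAdj]
  loopless := by constructor; rintro (⟨a | i⟩ | ⟨b, j⟩) h <;> simp_all [MAdj]

def D (m : ℕ) : MV m → MV m → ℕ := fun x y =>
  match x, y with
  | .inl (.inl a), .inl (.inl b) => if a = b then 0 else 4
  | .inl (.inl _), .inl (.inr _) => 2
  | .inl (.inr _), .inl (.inl _) => 2
  | .inl (.inr i), .inl (.inr j) => if i = j then 0 else 4
  | .inl (.inl a), .inr (b, _) => if a = b then 1 else 3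
  | .inl (.inr i), .inr (_, j) => if i = j then 1 else 3
  | .inr (b, _), .inl (.inl a) => if a = b then 1 else 3
  | .inr (_, j), .inl (.inr i) => if i = j then 1 else 3
  | .inr (a, i), .inr (b, j) => if a = b ∧ i = j then 0 else if a = b ∨ i = j then 2 else 4

lemma D_self (m : ℕ) (x : MV m) : D m x x = 0 := by
  rcases x with (⟨a | i⟩ | ⟨b, j⟩) <;> simp [D]

lemma D_lip {m : ℕ} {x z : MV m} (h : MAdj m x z) (y : MV m) :
    D m x y ≤ D m z y + 1 := by
  rcases x with (⟨a | i⟩ | ⟨b, j⟩) <;> rcases z with (⟨a' | i'⟩ | ⟨b', j'⟩) <;>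
    simp only [MAdj] at h <;> try exact h.elim
  all_goals rcases y with (⟨c | k⟩ | ⟨d, l⟩)
  all_goals simp only [D]
  all_goals split_ifs <;> simp_all

lemma D_le_length {m : ℕ} : ∀ {x y : MV m} (p : (modelG m).Walk x y), D m x y ≤ p.length
  | _, _, .nil => by simp [D_self]
  | x, y, .cons h q => by
      have h1 := D_lip (show MAdj _ x _ from h) y
      have h2 := D_le_length q
      simp only [SimpleGraph.Walk.length_cons]
      omega

lemma adjA {m : ℕ} (a : Bool) (i : Fin m) :
    (modelG m).Adj (.inl (.inl a)) (.inr (a, i)) := by simp [modelG, MAdj]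

lemma adjB {m : ℕ} (a : Bool) (i : Fin m) :
    (modelG m).Adj (.inl (.inr i)) (.inr (a, i)) := by simp [modelG, MAdj]

lemma exists_walk {m : ℕ} (hm : 0 < m) (x y : MV m) :
    ∃ p : (modelG m).Walk x y, p.length = D m x y := by
  have i0 : Fin m := ⟨0, hm⟩
  rcases x with (⟨a | i⟩ | ⟨a, i⟩) <;> rcases y with (⟨b | j⟩ | ⟨b, j⟩)
  · by_cases h : a = b
    · subst h; exact ⟨.nil, by simp [D]⟩
    · exact ⟨.cons (adjA a i0) (.cons (adjB a i0).symm (.cons (adjB b i0)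
        (.cons (adjA b i0).symm .nil))), by simp [D, h]⟩
  · exact ⟨.cons (adjA a j) (.cons (adjB a j).symm .nil), by simp [D]⟩
  · by_cases h : a = b
    · subst h; exact ⟨.cons (adjA a j) .nil, by simp [D]⟩
    · exact ⟨.cons (adjA a j) (.cons (adjB a j).symm (.cons (adjB b j) .nil)),
        by simp [D, h]⟩
  · exact ⟨.cons (adjB b i) (.cons (adjA b i).symm .nil), by simp [D]⟩
  · by_cases h : i = j
    · subst h; exact ⟨.nil, by simp [D]⟩
    · exact ⟨.cons (adjB true i) (.cons (adjA true i).symm (.cons (adjA true j)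
        (.cons (adjB true j).symm .nil))), by simp [D, h]⟩
  · by_cases h : i = j
    · subst h; exact ⟨.cons (adjB b i) .nil, by simp [D]⟩
    · exact ⟨.cons (adjB b i) (.cons (adjA b i).symm (.cons (adjA b j) .nil)),
        by simp [D, h]⟩
  · by_cases h : a = b
    · subst h; exact ⟨.cons (adjA a i).symm .nil, by simp [D]⟩
    · exact ⟨.cons (adjB a i).symm (.cons (adjB b i) (.cons (adjA b i).symm .nil)),
        by simp only [D, Walk.length_cons, Walk.length_nil]; rw [if_neg (Ne.symm h)]⟩
  · by_cases h : i = j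
    · subst h; exact ⟨.cons (adjB a i).symm .nil, by simp [D]⟩
    · exact ⟨.cons (adjA a i).symm (.cons (adjA a j) (.cons (adjB a j).symm .nil)),
        by simp only [D, Walk.length_cons, Walk.length_nil]; rw [if_neg (Ne.symm h)]⟩
  · by_cases h1 : a = b <;> by_cases h2 : i = j
    · subst h1; subst h2; exact ⟨.nil, by simp [D]⟩
    · subst h1; exact ⟨.cons (adjA a i).symm (.cons (adjA a j) .nil), by simp [D, h2]⟩
    · subst h2; exact ⟨.cons (adjB a i).symm (.cons (adjB b i) .nil), by simp [D, h1]⟩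
    · exact ⟨.cons (adjA a i).symm (.cons (adjA a j) (.cons (adjB a j).symm
        (.cons (adjB b j) .nil))), by simp [D, h1, h2]⟩

lemma dist_eq_D {m : ℕ} (hm : 0 < m) (x y : MV m) :
    (modelG m).dist x y = D m x y := by
  obtain ⟨p, hp⟩ := exists_walk hm x y
  refine le_antisymm (hp ▸ SimpleGraph.dist_le p) ?_
  obtain ⟨p', hp'⟩ := (SimpleGraph.Reachable.exists_walk_length_eq_dist ⟨p⟩ : _)
  calc D m x y ≤ p'.length := D_le_length p'
  _ = _ := hp'

def classIdx {m : ℕ} : MV m → Option (Fin m)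
  | .inl (.inl _) => none
  | .inl (.inr i) => some i
  | .inr (_, i) => some i

lemma model_lower {m : ℕ} (hm : 4 ≤ m) (W : Finset (MV m))
    (hW : IsResolving (modelG m) ↑W) : m - 1 ≤ W.card := by
  classical
  by_contra hlt
  push_neg at hlt
  set H : Finset (Fin m) :=
    Finset.univ.filter (fun i => ∃ w ∈ W, classIdx w = some i) with hH
  have hHW : H.card ≤ W.card := by
    apply Finset.card_le_card_of_surjOn (fun w => (classIdx w).getD ⟨0, by omega⟩)
    intro i hi
    simp only [hH, Finset.coe_filter, Set.mem_setOf_eq] at hi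
    obtain ⟨-, w, hwW, hw⟩ := hi
    exact ⟨w, hwW, by simp [hw]⟩
  have hcompl : 1 < (Finset.univ \ H).card := by
    have h1 : (Finset.univ \ H).card = m - H.card := by
      rw [Finset.card_sdiff_of_subset (Finset.subset_univ H)]; simp
    omega
  obtain ⟨i, hi, j, hj, hij⟩ := Finset.one_lt_card.mp hcompl
  have hiH : ∀ w ∈ W, classIdx w ≠ some i := by
    intro w hwW hc
    simp only [Finset.mem_sdiff, hH, Finset.mem_filter] at hi
    exact hi.2 ⟨hi.1, w, hwW, hc⟩
  have hjH : ∀ w ∈ W, classIdx w ≠ some j := by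
    intro w hwW hc
    simp only [Finset.mem_sdiff, hH, Finset.mem_filter] at hj
    exact hj.2 ⟨hj.1, w, hwW, hc⟩
  obtain ⟨w, hwW, hne⟩ := hW (.inr (true, i)) (.inr (true, j)) (by simp [hij])
  apply hne
  rw [dist_eq_D (by omega), dist_eq_D (by omega)]
  rcases w with (⟨a | k⟩ | ⟨b, k⟩)
  · rfl
  · have h1 : k ≠ i := fun h => hiH _ hwW (by simp [classIdx, h])
    have h2 : k ≠ j := fun h => hjH _ hwW (by simp [classIdx, h])
    simp [D, h1, h2]
  · have h1 : i ≠ k := fun h => hiH _ hwW (by simp [classIdx, h.symm])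
    have h2 : j ≠ k := fun h => hjH _ hwW (by simp [classIdx, h.symm])
    simp [D, h1, h2]


lemma fin_exists_t {m K : ℕ} (hK2 : 2 ≤ K) (hK : K < m) (i : Fin m) :
    ∃ t : Fin m, t.val < K ∧ t ≠ i := by
  by_cases h : i.val = 0
  · exact ⟨⟨1, by omega⟩, by show (1:ℕ) < K; omega,
      fun hh => by have := congrArg Fin.val hh; simp at this; omega⟩
  · exact ⟨⟨0, by omega⟩, by show (0:ℕ) < K; omega,
      fun hh => by have := congrArg Fin.val hh; simp at this; omega⟩

lemma model_upper {m : ℕ} (hm : 4 ≤ m) :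
    ∃ W : Finset (MV m), IsResolving (modelG m) ↑W ∧ W.card = m - 1 := by
  classical
  set K : ℕ := m - 2 with hKdef
  have hK : K < m := by omega
  have hK2 : 2 ≤ K := by omega
  set vK : Fin m := ⟨K, hK⟩ with hvK
  set W1 : Finset (MV m) :=
    Finset.image (fun t : Fin K => (Sum.inr (true, Fin.castLE hK.le t) : MV m))
      Finset.univ with hW1
  set W : Finset (MV m) := W1 ∪ {Sum.inl (Sum.inr vK)} with hWdef
  have hw0 : (Sum.inl (Sum.inr vK) : MV m) ∈ W := by
    simp [hWdef]
  have hwj : ∀ j : Fin m, j.val < K → (Sum.inr (true, j) : MV m) ∈ W := by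
    intro j hj
    refine Finset.mem_union_left _ ?_
    simp only [hW1, Finset.mem_image]
    exact ⟨⟨j.val, hj⟩, Finset.mem_univ _, by simp [Fin.castLE]⟩
  have hcard : W.card = m - 1 := by
    have hdisj : Disjoint W1 {(Sum.inl (Sum.inr vK) : MV m)} := by
      simp only [Finset.disjoint_singleton_right, hW1, Finset.mem_image]
      rintro ⟨t, -, ht⟩
      exact absurd ht (by simp)
    rw [hWdef, Finset.card_union_of_disjoint hdisj, Finset.card_singleton, hW1,
      Finset.card_image_of_injective _ ?inj, Finset.card_univ, Fintype.card_fin]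
    · omega
    · intro t t' htt
      simp only [Sum.inr.injEq, Prod.mk.injEq, true_and] at htt
      exact Fin.castLE_injective _ htt
  refine ⟨W, ?_, hcard⟩
  have key : ∀ x y : MV m, x ≠ y → ∃ w ∈ W, D m x w ≠ D m y w := by
    intro x y hxy
    rcases x with (⟨a | i⟩ | ⟨a, i⟩) <;> rcases y with (⟨b | j⟩ | ⟨b, j⟩)
    · -- inl inl a vs inl inl b
      have hab : a ≠ b := by rintro rfl; exact hxy rfl
      refine ⟨Sum.inr (true, ⟨0, by omega⟩), hwj _ (by show (0:ℕ) < K; omega), ?_⟩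
      cases a <;> cases b <;> simp_all [D]
    · -- inl inl a vs inl inr j : parity-ish via w0
      exact ⟨Sum.inl (Sum.inr vK), hw0, by simp only [D]; split_ifs <;> omega⟩
    · -- inl inl a vs inr (b,j) : parity via w0
      exact ⟨Sum.inl (Sum.inr vK), hw0, by simp only [D]; split_ifs <;> omega⟩
    · -- inl inr i vs inl inl b
      exact ⟨Sum.inl (Sum.inr vK), hw0, by simp only [D]; split_ifs <;> omega⟩
    · -- inl inr i vs inl inr j
      have hij : i ≠ j := by rintro rfl; exact hxy rfl
      by_cases hi : i = vK
      · refine ⟨Sum.inl (Sum.inr vK), hw0, ?_⟩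
        have hj : ¬ j = vK := fun h => hij (hi.trans h.symm)
        simp [D, hi, hj]
      by_cases hj : j = vK
      · exact ⟨Sum.inl (Sum.inr vK), hw0, by simp [D, hi, hj]⟩
      by_cases hiK : i.val < K
      · exact ⟨Sum.inr (true, i), hwj i hiK, by simp [D, Ne.symm hij]⟩
      by_cases hjK : j.val < K
      · exact ⟨Sum.inr (true, j), hwj j hjK, by simp [D, hij]⟩
      · exfalso
        have h1 : i.val < m := i.isLt
        have h2 : j.val < m := j.isLt
        have h3 : i.val ≠ K := fun h => hi (Fin.ext h)
        have h4 : j.val ≠ K := fun h => hj (Fin.ext h)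
        exact hij (Fin.ext (by omega))
    · -- inl inr i vs inr (b,j) : parity via w0
      exact ⟨Sum.inl (Sum.inr vK), hw0, by simp only [D]; split_ifs <;> omega⟩
    · -- inr (a,i) vs inl inl b : parity
      exact ⟨Sum.inl (Sum.inr vK), hw0, by simp only [D]; split_ifs <;> omega⟩
    · -- inr (a,i) vs inl inr j : parity
      exact ⟨Sum.inl (Sum.inr vK), hw0, by simp only [D]; split_ifs <;> omega⟩
    · -- inr (a,i) vs inr (b,j) : the main case
      by_cases hij : i = j
      · -- same index, different bool
        subst hij
        have hab : a ≠ b := by rintro rfl; exact hxy rfl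
        refine ⟨Sum.inr (true, ⟨0, by omega⟩), hwj _ (by show (0:ℕ) < K; omega), ?_⟩
        by_cases hit : i = (⟨0, by omega⟩ : Fin m) <;>
          cases a <;> cases b <;> simp_all [D]
      · by_cases hab : a = b
        · -- same bool, different index
          subst hab
          by_cases hiK : i.val < K
          · refine ⟨Sum.inr (true, i), hwj i hiK, ?_⟩
            cases a <;> simp [D, hij, Ne.symm hij]
          by_cases hjK : j.val < K
          · refine ⟨Sum.inr (true, j), hwj j hjK, ?_⟩
            cases a <;> simp [D, hij, Ne.symm hij]
          · -- both big : one is vK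
            have h1 : i.val < m := i.isLt
            have h2 : j.val < m := j.isLt
            have h5 : i.val ≠ j.val := fun h => hij (Fin.ext h)
            have h6 : i = vK ∨ j = vK := by
              rcases Nat.lt_or_ge i.val (K+1) with h | h
              · exact Or.inl (Fin.ext (by simp [hvK]; omega))
              · exact Or.inr (Fin.ext (by simp [hvK]; omega))
            refine ⟨Sum.inl (Sum.inr vK), hw0, ?_⟩
            rcases h6 with h6 | h6
            · subst h6; simp [D, hij]
            · subst h6
              have hvi : ¬ vK = i := fun h => hij h.symm
              simp [D, hvi]
        · -- different bool and different index
          by_cases hiK : i.val < K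
          · by_cases hjK : j.val < K
            · rcases Bool.eq_false_or_eq_true a with ha | ha
              · subst ha
                refine ⟨Sum.inr (true, i), hwj i hiK, ?_⟩
                cases b <;> simp_all [D, hij, Ne.symm hij]
              · subst ha
                refine ⟨Sum.inr (true, j), hwj j hjK, ?_⟩
                cases b <;> simp_all [D, hij, Ne.symm hij]
            · -- i small, j big
              by_cases hj : j = vK
              · subst hj
                refine ⟨Sum.inl (Sum.inr vK), hw0, ?_⟩
                have hvi : ¬ vK = i := fun h => by
                  have := congrArg Fin.val h; simp [hvK] at this; omega
                simp [D, hvi]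
              · -- j is the top index : pick t < K with t ≠ i (and t ≠ j automatically)
                obtain ⟨t, htK, hti⟩ := fin_exists_t hK2 hK i
                have htj : t ≠ j := fun h => by
                  have := congrArg Fin.val h; omega
                refine ⟨Sum.inr (true, t), hwj t htK, ?_⟩
                cases a <;> cases b <;>
                  simp_all [D, Ne.symm hti, Ne.symm htj]
          · by_cases hjK : j.val < K
            · -- j small, i big : mirror
              by_cases hi : i = vK
              · subst hi
                refine ⟨Sum.inl (Sum.inr vK), hw0, ?_⟩
                have hvj : ¬ vK = j := fun h => by
                  have := congrArg Fin.val h; simp [hvK] at this; omega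
                simp [D, hvj]
              · obtain ⟨t, htK, htj⟩ := fin_exists_t hK2 hK j
                have hti : t ≠ i := fun h => by
                  have h3 : i.val ≠ K := fun h' => hi (Fin.ext h')
                  have := congrArg Fin.val h; omega
                refine ⟨Sum.inr (true, t), hwj t htK, ?_⟩
                cases a <;> cases b <;>
                  simp_all [D, Ne.symm hti, Ne.symm htj]
            · -- both big : one is vK
              have h1 : i.val < m := i.isLt
              have h2 : j.val < m := j.isLt
              have h5 : i.val ≠ j.val := fun h => hij (Fin.ext h)
              have h6 : i = vK ∨ j = vK := by
                rcases Nat.lt_or_ge i.val (K+1) with h | h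
                · exact Or.inl (Fin.ext (by simp [hvK]; omega))
                · exact Or.inr (Fin.ext (by simp [hvK]; omega))
              refine ⟨Sum.inl (Sum.inr vK), hw0, ?_⟩
              rcases h6 with h6 | h6
              · subst h6; simp [D, hij]
              · subst h6
                have hvi : ¬ vK = i := fun h => hij h.symm
                simp [D, hvi]
  intro x y hxy
  obtain ⟨w, hw, hD⟩ := key x y hxy
  exact ⟨w, hw, by rw [dist_eq_D (by omega), dist_eq_D (by omega)]; exact hD⟩


lemma model_dim {m : ℕ} (hm : 4 ≤ m) : metricDim (modelG m) = m - 1 := by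
  obtain ⟨W, hW, hc⟩ := model_upper hm
  refine le_antisymm (Nat.sInf_le ⟨W, hW, hc⟩) (le_csInf ⟨m - 1, W, hW, hc⟩ ?_)
  rintro k ⟨W', hW', rfl⟩
  exact model_lower hm W' hW'

section IsoInvariance

variable {V V' : Type*} {G : SimpleGraph V} {G' : SimpleGraph V'}

lemma iso_dist_le (e : G ≃g G') (u v : V) : G'.dist (e u) (e v) ≤ G.dist u v := by
  by_cases h : G.Reachable u v
  · obtain ⟨p, hp⟩ := h.exists_walk_length_eq_dist
    calc G'.dist (e u) (e v) ≤ (p.map e.toHom).length := SimpleGraph.dist_le _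
    _ = p.length := by simp
    _ = G.dist u v := hp
  · have h' : ¬ G'.Reachable (e u) (e v) := by
      rintro ⟨p⟩
      exact h ⟨(p.map e.symm.toHom).copy (by simp) (by simp)⟩
    rw [SimpleGraph.dist_eq_zero_of_not_reachable h,
      SimpleGraph.dist_eq_zero_of_not_reachable h']

lemma iso_dist (e : G ≃g G') (u v : V) : G'.dist (e u) (e v) = G.dist u v := by
  refine le_antisymm (iso_dist_le e u v) ?_
  have := iso_dist_le e.symm (e u) (e v)
  simpa using this

lemma isResolving_image {A B : Type*} [DecidableEq B] {H : SimpleGraph A}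
    {H' : SimpleGraph B} (f : H ≃g H') (W : Finset A) (hW : IsResolving H ↑W) :
    IsResolving H' ↑(W.image f) := by
  intro x y hxy
  obtain ⟨w, hw, hne⟩ := hW (f.symm x) (f.symm y) (fun h => hxy (by
    have := congrArg f h; simpa using this))
  refine ⟨f w, Finset.mem_coe.mpr (Finset.mem_image_of_mem _ hw), ?_⟩
  have h1 : H'.dist x (f w) = H.dist (f.symm x) w := by
    have := iso_dist f (f.symm x) w; simpa using this
  have h2 : H'.dist y (f w) = H.dist (f.symm y) w := by
    have := iso_dist f (f.symm y) w; simpa using this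
  rw [h1, h2]; exact hne

lemma metricDim_eq_of_iso (e : G ≃g G') : metricDim G = metricDim G' := by
  classical
  unfold metricDim
  congr 1
  ext k
  constructor
  · rintro ⟨W, hW, rfl⟩
    exact ⟨W.image e, isResolving_image e W hW,
      Finset.card_image_of_injective _ e.toEquiv.injective⟩
  · rintro ⟨W, hW, rfl⟩
    exact ⟨W.image e.symm, isResolving_image e.symm W hW,
      Finset.card_image_of_injective _ e.symm.toEquiv.injective⟩

/-- adjacency in `BS` between a vertex and an edge-vertex -/
lemma BS_adj_inl_inr {v : V} {e : G.edgeSet} :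
    (BS G).Adj (Sum.inl v) (Sum.inr e) ↔ v ∈ e.1 := by
  constructor
  · rintro (⟨v', e', h1, h2, h3⟩ | ⟨v', e', h1, h2, h3⟩)
    · obtain rfl : v = v' := by simpa using h1
      obtain rfl : e = e' := by simpa using h2
      exact h3
    · simp at h1
  · intro h
    exact Or.inl ⟨v, e, rfl, rfl, h⟩

lemma BS_adj_inl_inl {v w : V} : ¬ (BS G).Adj (Sum.inl v) (Sum.inl w) := by
  rintro (⟨v', e', h1, h2, h3⟩ | ⟨v', e', h1, h2, h3⟩) <;> simp_all

lemma BS_adj_inr_inr {e f : G.edgeSet} : ¬ (BS G).Adj (Sum.inr e) (Sum.inr f) := by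
  rintro (⟨v', e', h1, h2, h3⟩ | ⟨v', e', h1, h2, h3⟩) <;> simp_all

lemma BS_adj_inr_inl {v : V} {e : G.edgeSet} :
    (BS G).Adj (Sum.inr e) (Sum.inl v) ↔ v ∈ e.1 := by
  rw [(BS G).adj_comm]; exact BS_adj_inl_inr

/-- `BS` is functorial under isomorphisms. -/
def BSIso (f : G ≃g G') : BS G ≃g BS G' where
  toEquiv := Equiv.sumCongr f.toEquiv f.mapEdgeSet
  map_rel_iff' := by
    rintro (v | e) (w | e')
    · simp [BS_adj_inl_inl]
    · simp only [Equiv.sumCongr_apply, Sum.map_inl, Sum.map_inr, BS_adj_inl_inr]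
      show f v ∈ Sym2.map f e'.1 ↔ _
      constructor
      · intro h
        obtain ⟨y, hy, hyv⟩ := Sym2.mem_map.mp h
        rwa [← f.toEquiv.injective hyv]
      · intro h; exact Sym2.mem_map.mpr ⟨v, h, rfl⟩
    · simp only [Equiv.sumCongr_apply, Sum.map_inl, Sum.map_inr, BS_adj_inr_inl]
      show f w ∈ Sym2.map f e.1 ↔ _
      constructor
      · intro h
        obtain ⟨y, hy, hyv⟩ := Sym2.mem_map.mp h
        rwa [← f.toEquiv.injective hyv]
      · intro h; exact Sym2.mem_map.mpr ⟨w, h, rfl⟩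
    · simp [BS_adj_inr_inr]

end IsoInvariance

def baseK (m : ℕ) : SimpleGraph (Bool ⊕ Fin m) where
  Adj x y := (x.isLeft ∧ y.isRight) ∨ (x.isRight ∧ y.isLeft)
  symm := by constructor; rintro (a | i) (b | j) h <;> simp_all
  loopless := by constructor; rintro (a | i) h <;> simp_all

section EdgeEquiv

variable {m : ℕ}

lemma baseK_adj (a : Bool) (i : Fin m) :
    (baseK m).Adj (Sum.inl a) (Sum.inr i) := Or.inl ⟨rfl, rfl⟩

/-- the edges of `baseK m`, concretely -/
def gEdge (p : Bool × Fin m) : (baseK m).edgeSet :=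
  ⟨s(Sum.inl p.1, Sum.inr p.2), (baseK m).mem_edgeSet.mpr (baseK_adj p.1 p.2)⟩

lemma gEdge_bijective : Function.Bijective (gEdge (m := m)) := by
  constructor
  · rintro ⟨a, i⟩ ⟨b, j⟩ h
    have h1 := congrArg Subtype.val h
    simp only [gEdge, Sym2.eq, Sym2.rel_iff', Prod.mk.injEq, Sum.inl.injEq,
      Sum.inr.injEq] at h1
    rcases h1 with ⟨h2, h3⟩ | ⟨h2, h3⟩ <;> simp_all
  · rintro ⟨e, he⟩
    have key : ∀ (x y : Bool ⊕ Fin m) (h : s(x, y) ∈ (baseK m).edgeSet),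
        ∃ p, gEdge p = ⟨s(x, y), h⟩ := by
      intro x y h
      have hadj := (baseK m).mem_edgeSet.mp h
      rcases x with a | i <;> rcases y with b | j
      · rcases hadj with ⟨-, h2⟩ | ⟨h2, -⟩ <;> simp at h2
      · exact ⟨(a, j), rfl⟩
      · exact ⟨(b, i), Subtype.ext (Sym2.eq_swap)⟩
      · rcases hadj with ⟨h2, -⟩ | ⟨-, h2⟩ <;> simp at h2
    revert he
    refine Sym2.ind ?_ e
    intro x y he
    exact key x y he

abbrev MV' (m : ℕ) := (Bool ⊕ Fin m) ⊕ (baseK m).edgeSet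

/-- the isomorphism between the abstract model and `BS (baseK m)` -/
noncomputable def modelIso (m : ℕ) : modelG m ≃g BS (baseK m) where
  toEquiv := Equiv.sumCongr (Equiv.refl _) (Equiv.ofBijective gEdge gEdge_bijective)
  map_rel_iff' := by
    rintro (v | ⟨a, i⟩) (w | ⟨b, j⟩)
    · simp only [Equiv.sumCongr_apply, Sum.map_inl, Equiv.refl_apply]
      constructor
      · intro h; exact absurd h BS_adj_inl_inl
      · intro h
        exfalso
        rcases v with a | i <;> rcases w with b | j <;> exact h
    · simp only [Equiv.sumCongr_apply, Sum.map_inl, Sum.map_inr, Equiv.refl_apply,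
        Equiv.ofBijective_apply, BS_adj_inl_inr]
      show v ∈ s(Sum.inl b, Sum.inr j) ↔ _
      rw [Sym2.mem_iff]
      rcases v with a | i
      · show _ ↔ MAdj m (.inl (.inl a)) (.inr (b, j))
        simp [MAdj]
      · show _ ↔ MAdj m (.inl (.inr i)) (.inr (b, j))
        simp [MAdj]
    · simp only [Equiv.sumCongr_apply, Sum.map_inl, Sum.map_inr, Equiv.refl_apply,
        Equiv.ofBijective_apply, BS_adj_inr_inl]
      show w ∈ s(Sum.inl a, Sum.inr i) ↔ _
      rw [Sym2.mem_iff]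
      rcases w with b | j
      · show _ ↔ MAdj m (.inr (a, i)) (.inl (.inl b))
        simp [MAdj, eq_comm]
      · show _ ↔ MAdj m (.inr (a, i)) (.inl (.inr j))
        simp [MAdj, eq_comm]
    · simp only [Equiv.sumCongr_apply, Sum.map_inr]
      constructor
      · intro h; exact absurd h BS_adj_inr_inr
      · intro h; exact h.elim

end EdgeEquiv

section NT

variable {q : ℕ}

/-- the nonzero elements of `ZMod 3` -/
def ebool : Bool ≃ {u : ZMod 3 // u ≠ 0} where
  toFun b := if b then ⟨1, by decide⟩ else ⟨2, by decide⟩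
  invFun u := decide (u.1 = 1)
  left_inv := by decide
  right_inv := by decide

noncomputable def efin (hq : q.Prime) : Fin (q - 1) ≃ {v : ZMod q // v ≠ 0} := by
  haveI : Fact q.Prime := ⟨hq⟩
  haveI : NeZero q := ⟨hq.ne_zero⟩
  refine (Fintype.equivFinOfCardEq ?_).symm
  rw [Fintype.card_subtype_compl, ZMod.card, Fintype.card_subtype_eq]

noncomputable def crt (hq : q.Prime) (hq3 : 3 < q) :
    ZMod (3 * q) ≃+* ZMod 3 × ZMod q :=
  ZMod.chineseRemainder ((Nat.coprime_primes Nat.prime_three hq).mpr (by omega))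

lemma crt_symm_ne_zero (hq : q.Prime) (hq3 : 3 < q) {p : ZMod 3 × ZMod q}
    (hp : p ≠ 0) : (crt hq hq3).symm p ≠ 0 := by
  intro h
  apply hp
  have := congrArg (crt hq hq3) h
  rwa [RingEquiv.apply_symm_apply, map_zero] at this

noncomputable def Fl (hq : q.Prime) (hq3 : 3 < q) (b : Bool) : ZMod (3 * q) :=
  (crt hq hq3).symm (ebool b, 0)

noncomputable def Fr (hq : q.Prime) (hq3 : 3 < q) (i : Fin (q - 1)) : ZMod (3 * q) :=
  (crt hq hq3).symm (0, efin hq i)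

lemma Fl_ne_zero (hq : q.Prime) (hq3 : 3 < q) (b : Bool) : Fl hq hq3 b ≠ 0 :=
  crt_symm_ne_zero hq hq3 (by
    intro h
    exact (ebool b).2 (congrArg Prod.fst h))

lemma Fr_ne_zero (hq : q.Prime) (hq3 : 3 < q) (i : Fin (q - 1)) : Fr hq hq3 i ≠ 0 :=
  crt_symm_ne_zero hq hq3 (by
    intro h
    exact (efin hq i).2 (congrArg Prod.snd h))

lemma Fl_mul_Fr (hq : q.Prime) (hq3 : 3 < q) (b : Bool) (i : Fin (q - 1)) :
    Fl hq hq3 b * Fr hq hq3 i = 0 := by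
  rw [Fl, Fr, ← map_mul, Prod.mk_mul_mk, mul_zero, zero_mul, ← Prod.zero_eq_mk, map_zero]

lemma Fr_mul_Fl (hq : q.Prime) (hq3 : 3 < q) (b : Bool) (i : Fin (q - 1)) :
    Fr hq hq3 i * Fl hq hq3 b = 0 := by
  calc Fr hq hq3 i * Fl hq hq3 b = Fl hq hq3 b * Fr hq hq3 i := mul_comm _ _
  _ = 0 := Fl_mul_Fr hq hq3 b i

lemma Fl_mul_Fl (hq : q.Prime) (hq3 : 3 < q) (b b' : Bool) :
    Fl hq hq3 b * Fl hq hq3 b' ≠ 0 := by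
  haveI : Fact (Nat.Prime 3) := ⟨by norm_num⟩
  simp only [Fl]
  rw [← map_mul, Prod.mk_mul_mk, mul_zero]
  apply crt_symm_ne_zero hq hq3
  intro h
  have h1 : ((ebool b : ZMod 3) * (ebool b' : ZMod 3)) = 0 := congrArg Prod.fst h
  rcases mul_eq_zero.mp h1 with h2 | h2
  · exact (ebool b).2 h2
  · exact (ebool b').2 h2

lemma Fr_mul_Fr (hq : q.Prime) (hq3 : 3 < q) (i i' : Fin (q - 1)) :
    Fr hq hq3 i * Fr hq hq3 i' ≠ 0 := by
  haveI : Fact q.Prime := ⟨hq⟩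
  simp only [Fr]
  rw [← map_mul, Prod.mk_mul_mk, mul_zero]
  apply crt_symm_ne_zero hq hq3
  intro h
  have h1 : ((efin hq i : ZMod q) * (efin hq i' : ZMod q)) = 0 := congrArg Prod.snd h
  rcases mul_eq_zero.mp h1 with h2 | h2
  · exact (efin hq i).2 h2
  · exact (efin hq i').2 h2

lemma Fl_ne_Fr (hq : q.Prime) (hq3 : 3 < q) (b : Bool) (i : Fin (q - 1)) :
    Fl hq hq3 b ≠ Fr hq hq3 i := by
  intro h
  rw [Fl, Fr] at h
  have := (crt hq hq3).symm.injective h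
  exact (ebool b).2 (congrArg Prod.fst this)

/-- The vertex map from `Bool ⊕ Fin (q-1)` to the zero divisors of `ZMod (3q)`. -/
noncomputable def F (hq : q.Prime) (hq3 : 3 < q) : Bool ⊕ Fin (q - 1) → ZDVert (3 * q)
  | .inl b => ⟨Fl hq hq3 b, Fl_ne_zero hq hq3 b,
      Fr hq hq3 ⟨0, by omega⟩, Fr_ne_zero hq hq3 _, Fl_mul_Fr hq hq3 _ _⟩
  | .inr i => ⟨Fr hq hq3 i, Fr_ne_zero hq hq3 i,
      Fl hq hq3 true, Fl_ne_zero hq hq3 _, Fr_mul_Fl hq hq3 _ _⟩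

lemma F_bijective (hq : q.Prime) (hq3 : 3 < q) : Function.Bijective (F hq hq3) := by
  haveI : Fact q.Prime := ⟨hq⟩
  constructor
  · rintro (b | i) (b' | i') h <;>
      have hval := congrArg (fun z : ZDVert (3 * q) => z.1) h
    · simp only [F, Fl] at hval
      have := (crt hq hq3).symm.injective hval
      exact congrArg Sum.inl (ebool.injective (Subtype.ext (congrArg Prod.fst this)))
    · exact absurd hval (Fl_ne_Fr hq hq3 b i')
    · exact absurd hval.symm (Fl_ne_Fr hq hq3 b' i)
    · simp only [F, Fr] at hval
      have := (crt hq hq3).symm.injective hval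
      exact congrArg Sum.inr ((efin hq).injective (Subtype.ext (congrArg Prod.snd this)))
  · rintro ⟨a, ha0, b, hb0, hab⟩
    rcases hcrt : (crt hq hq3) a with ⟨u, v⟩
    have hae : a = (crt hq hq3).symm (u, v) := by
      rw [← hcrt, RingEquiv.symm_apply_apply]
    have hcases : u = 0 ∨ v = 0 := by
      by_contra hcon
      push_neg at hcon
      apply hb0
      have h1 : (crt hq hq3) (a * b) = 0 := by rw [hab, map_zero]
      rw [map_mul, hcrt] at h1
      have h2 : u * ((crt hq hq3) b).1 = 0 := congrArg Prod.fst h1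
      have h3 : v * ((crt hq hq3) b).2 = 0 := congrArg Prod.snd h1
      have h4 : ((crt hq hq3) b).1 = 0 := by
        rcases mul_eq_zero.mp h2 with h | h
        · exact absurd h hcon.1
        · exact h
      have h5 : ((crt hq hq3) b).2 = 0 := by
        rcases mul_eq_zero.mp h3 with h | h
        · exact absurd h hcon.2
        · exact h
      have h6 : (crt hq hq3) b = 0 := by
        rw [← Prod.mk.eta (p := (crt hq hq3) b), h4, h5]; rfl
      have := congrArg (crt hq hq3).symm h6
      rwa [RingEquiv.symm_apply_apply, map_zero] at this
    rcases hcases with h | h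
    · -- u = 0, so v ≠ 0 : right class
      subst h
      have hv0 : v ≠ 0 := by
        intro hv0
        subst hv0
        exact ha0 (by rw [hae, ← Prod.zero_eq_mk, map_zero])
      refine ⟨Sum.inr ((efin hq).symm ⟨v, hv0⟩), Subtype.ext ?_⟩
      show Fr hq hq3 ((efin hq).symm ⟨v, hv0⟩) = a
      rw [Fr, Equiv.apply_symm_apply, hae]
    · subst h
      have hu0 : u ≠ 0 := by
        intro hu0
        subst hu0
        exact ha0 (by rw [hae, ← Prod.zero_eq_mk, map_zero])
      refine ⟨Sum.inl (ebool.symm ⟨u, hu0⟩), Subtype.ext ?_⟩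
      show Fl hq hq3 (ebool.symm ⟨u, hu0⟩) = a
      rw [Fl, Equiv.apply_symm_apply, hae]

lemma F_adj (hq : q.Prime) (hq3 : 3 < q) : ∀ x y : Bool ⊕ Fin (q - 1),
    (zdGraph (3 * q)).Adj (F hq hq3 x) (F hq hq3 y) ↔ (baseK (q - 1)).Adj x y := by
  rintro (b | i) (b' | i')
  · constructor
    · rintro ⟨-, h⟩
      exact absurd h (Fl_mul_Fl hq hq3 b b')
    · rintro (⟨-, h⟩ | ⟨h, -⟩) <;> simp at h
  · constructor
    · intro h
      exact Or.inl ⟨rfl, rfl⟩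
    · intro h
      refine ⟨fun hh => ?_, Fl_mul_Fr hq hq3 b i'⟩
      exact Fl_ne_Fr hq hq3 b i' (congrArg (fun z : ZDVert (3 * q) => z.1) hh)
  · constructor
    · intro h
      exact Or.inr ⟨rfl, rfl⟩
    · intro h
      refine ⟨fun hh => ?_, Fr_mul_Fl hq hq3 b' i⟩
      exact Fl_ne_Fr hq hq3 b' i
        (congrArg (fun z : ZDVert (3 * q) => z.1) hh).symm
  · constructor
    · rintro ⟨-, h⟩
      exact absurd h (Fr_mul_Fr hq hq3 i i')
    · rintro (⟨h, -⟩ | ⟨-, h⟩) <;> simp at h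

/-- The graph isomorphism between the complete bipartite model and the
zero-divisor graph of `ZMod (3q)`. -/
noncomputable def baseIso (hq : q.Prime) (hq3 : 3 < q) :
    baseK (q - 1) ≃g zdGraph (3 * q) where
  toEquiv := Equiv.ofBijective (F hq hq3) (F_bijective hq hq3)
  map_rel_iff' := @fun x y => F_adj hq hq3 x y

end NT
end ZDAux

open ZDAux in
theorem stmt1 (q : ℕ) (hq : q.Prime) (hq3 : 3 < q) :
    metricDim (BS (zdGraph (3 * q))) = q - 2 := by
  have h4 : q ≠ 4 := by rintro rfl; norm_num at hq
  have hm : 4 ≤ q - 1 := by omega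
  have e1 : BS (baseK (q - 1)) ≃g BS (zdGraph (3 * q)) := BSIso (baseIso hq hq3)
  have e2 : modelG (q - 1) ≃g BS (baseK (q - 1)) := modelIso (q - 1)
  calc metricDim (BS (zdGraph (3 * q)))
      = metricDim (BS (baseK (q - 1))) := (metricDim_eq_of_iso e1).symm
    _ = metricDim (modelG (q - 1)) := (metricDim_eq_of_iso e2).symm
    _ = (q - 1) - 1 := model_dim hm
    _ = q - 2 := by omega
end

section
/- Let p and q be distinct odd primes with p ≥ 5 and p + 1 < q < 2p - 1, and let n = pq. Then the metric dimension of the barycentric subdivision of the zero divisor graph of Z_n is strictly greater than q - 2, i.e. dim(BS(Γ(Z_{pq}))) > q - 2. -/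
open SimpleGraph

section Abstract

open Sum

variable {V : Type*} {G : SimpleGraph V} {c : V → Bool}

lemma BS_adj_inl_inr {v : V} {e : G.edgeSet} :
    (BS G).Adj (inl v) (inr e) ↔ v ∈ e.1 := by
  constructor
  · rintro (⟨v', e', h1, h2, h3⟩ | ⟨v', e', h1, h2, h3⟩)
    · cases h1; cases h2; exact h3
    · cases h1
  · intro h; exact Or.inl ⟨v, e, rfl, rfl, h⟩

lemma BS_adj_inr_inl {v : V} {e : G.edgeSet} :
    (BS G).Adj (inr e) (inl v) ↔ v ∈ e.1 := by
  rw [SimpleGraph.adj_comm]; exact BS_adj_inl_inr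

lemma BS_not_adj_inl_inl {u v : V} : ¬ (BS G).Adj (inl u) (inl v) := by
  rintro (⟨v', e', h1, h2, h3⟩ | ⟨v', e', h1, h2, h3⟩) <;> simp_all

lemma BS_not_adj_inr_inr {e f : G.edgeSet} : ¬ (BS G).Adj (inr e) (inr f) := by
  rintro (⟨v', e', h1, h2, h3⟩ | ⟨v', e', h1, h2, h3⟩) <;> simp_all

variable (hadj : ∀ u v, G.Adj u v ↔ c u ≠ c v)

include hadj in
lemma exists_endpoints (e : G.edgeSet) :
    ∃ u v : V, c u = true ∧ c v = false ∧ e.1 = s(u, v) := by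
  obtain ⟨E, hE⟩ := e
  induction E with
  | _ x y =>
    rw [SimpleGraph.mem_edgeSet, hadj] at hE
    rcases hbx : c x with _ | _
    · exact ⟨y, x, by rcases hby : c y with _|_ <;> simp_all, hbx, Sym2.eq_swap⟩
    · exact ⟨x, y, hbx, by rcases hby : c y with _|_ <;> simp_all, rfl⟩

noncomputable def eT (hadj : ∀ u v, G.Adj u v ↔ c u ≠ c v) (e : G.edgeSet) : V :=
  (exists_endpoints hadj e).choose

noncomputable def eF (hadj : ∀ u v, G.Adj u v ↔ c u ≠ c v) (e : G.edgeSet) : V :=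
  (exists_endpoints hadj e).choose_spec.choose

lemma eT_spec (e : G.edgeSet) : c (eT hadj e) = true :=
  (exists_endpoints hadj e).choose_spec.choose_spec.1

lemma eF_spec (e : G.edgeSet) : c (eF hadj e) = false :=
  (exists_endpoints hadj e).choose_spec.choose_spec.2.1

lemma edge_eq (e : G.edgeSet) : e.1 = s(eT hadj e, eF hadj e) :=
  (exists_endpoints hadj e).choose_spec.choose_spec.2.2

lemma mem_edge_iff {v : V} {e : G.edgeSet} :
    v ∈ e.1 ↔ v = eT hadj e ∨ v = eF hadj e := by
  rw [edge_eq hadj e]; exact Sym2.mem_iff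

lemma eq_eT_of_true {v : V} {e : G.edgeSet} (hv : c v = true) (hm : v ∈ e.1) :
    v = eT hadj e := by
  rcases (mem_edge_iff hadj).mp hm with h | h
  · exact h
  · rw [h] at hv; rw [eF_spec hadj e] at hv; cases hv

lemma eq_eF_of_false {v : V} {e : G.edgeSet} (hv : c v = false) (hm : v ∈ e.1) :
    v = eF hadj e := by
  rcases (mem_edge_iff hadj).mp hm with h | h
  · rw [h] at hv; rw [eT_spec hadj e] at hv; cases hv
  · exact h

/-- make an edge from a true vertex and a false vertex -/
def mkE (hadj : ∀ u v, G.Adj u v ↔ c u ≠ c v) {u v : V} (hu : c u = true) (hv : c v = false) :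
    G.edgeSet :=
  ⟨s(u, v), by rw [SimpleGraph.mem_edgeSet, hadj, hu, hv]; simp⟩

lemma mem_mkE_left {u v : V} (hu : c u = true) (hv : c v = false) :
    u ∈ (mkE hadj hu hv).1 := by
  simp [mkE]

lemma mem_mkE_right {u v : V} (hu : c u = true) (hv : c v = false) :
    v ∈ (mkE hadj hu hv).1 := by
  simp [mkE]

lemma eT_mkE {u v : V} (hu : c u = true) (hv : c v = false) :
    eT hadj (mkE hadj hu hv) = u := by
  have := eq_eT_of_true hadj hu (mem_mkE_left hadj hu hv)
  exact this.symm

lemma eF_mkE {u v : V} (hu : c u = true) (hv : c v = false) :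
    eF hadj (mkE hadj hu hv) = v := by
  have := eq_eF_of_false hadj hv (mem_mkE_right hadj hu hv)
  exact this.symm

lemma eT_mem (e : G.edgeSet) : eT hadj e ∈ e.1 := by
  rw [mem_edge_iff hadj]; left; rfl

lemma eF_mem (e : G.edgeSet) : eF hadj e ∈ e.1 := by
  rw [mem_edge_iff hadj]; right; rfl

def pc {G : SimpleGraph V} : V ⊕ G.edgeSet → ℕ := Sum.elim (fun _ => 0) (fun _ => 1)

lemma adj_pc {x y : V ⊕ G.edgeSet} (h : (BS G).Adj x y) : pc x + pc y = 1 := by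
  rcases h with ⟨v, e, rfl, rfl, -⟩ | ⟨v, e, rfl, rfl, -⟩ <;> simp [pc]

lemma walk_parity {x y : V ⊕ G.edgeSet} (w : (BS G).Walk x y) :
    (w.length + pc x + pc y) % 2 = 0 := by
  induction w with
  | nil => simp only [SimpleGraph.Walk.length_nil]; omega
  | cons h p ih =>
      have h1 := adj_pc h
      rw [SimpleGraph.Walk.length_cons]
      omega

include hadj in
lemma reach_aux {t0 f0 : V} (ht0 : c t0 = true) (hf0 : c f0 = false)
    (x : V ⊕ G.edgeSet) : (BS G).Reachable x (inl t0) := by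
  have key : ∀ v : V, (BS G).Reachable (inl v : V ⊕ G.edgeSet) (inl t0) := by
    intro v
    rcases cb : c v with _ | _
    · exact (BS_adj_inl_inr.mpr (mem_mkE_right hadj ht0 cb)).reachable.trans
        (BS_adj_inr_inl.mpr (mem_mkE_left hadj ht0 cb)).reachable
    · exact ((BS_adj_inl_inr.mpr (mem_mkE_left hadj cb hf0)).reachable.trans
        (BS_adj_inr_inl.mpr (mem_mkE_right hadj cb hf0)).reachable).trans
        ((BS_adj_inl_inr.mpr (mem_mkE_right hadj ht0 hf0)).reachable.trans
        (BS_adj_inr_inl.mpr (mem_mkE_left hadj ht0 hf0)).reachable)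
  rcases x with v | e
  · exact key v
  · exact (BS_adj_inr_inl.mpr (eT_mem hadj e)).reachable.trans (key (eT hadj e))

include hadj in
lemma BS_preconnected {t0 f0 : V} (ht0 : c t0 = true) (hf0 : c f0 = false) :
    (BS G).Preconnected := fun x y =>
  (reach_aux hadj ht0 hf0 x).trans (reach_aux hadj ht0 hf0 y).symm

open scoped Classical in
noncomputable def D (hadj : ∀ u v, G.Adj u v ↔ c u ≠ c v) :
    (V ⊕ G.edgeSet) → (V ⊕ G.edgeSet) → ℕ
  | inl u, inl v => if u = v then 0 else if c u = c v then 4 else 2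
  | inl v, inr e => if v ∈ e.1 then 1 else 3
  | inr e, inl v => if v ∈ e.1 then 1 else 3
  | inr e, inr f =>
      if e = f then 0 else if eT hadj e = eT hadj f ∨ eF hadj e = eF hadj f then 2 else 4

lemma adj_of_walk_length_one {x y : V ⊕ G.edgeSet} (p : (BS G).Walk x y)
    (h : p.length = 1) : (BS G).Adj x y := by
  cases p with
  | nil => simp at h
  | cons ha q =>
    cases q with
    | nil => exact ha
    | cons hb r => simp [SimpleGraph.Walk.length_cons] at h

lemma mid_of_walk_length_two {x y : V ⊕ G.edgeSet} (p : (BS G).Walk x y)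
    (h : p.length = 2) : ∃ z, (BS G).Adj x z ∧ (BS G).Adj z y := by
  cases p with
  | nil => simp at h
  | cons ha q =>
    cases q with
    | nil => simp at h
    | cons hb r =>
      cases r with
      | nil => exact ⟨_, ha, hb⟩
      | cons hc s => simp [SimpleGraph.Walk.length_cons] at h

variable {t0 f0 : V}

include hadj in
open scoped Classical in
lemma dist_inl_inr (ht0 : c t0 = true) (hf0 : c f0 = false) (v : V) (e : G.edgeSet) :
    (BS G).dist (inl v) (inr e) = if v ∈ e.1 then 1 else 3 := by
  by_cases hm : v ∈ e.1
  · simp only [hm, if_true]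
    exact SimpleGraph.dist_eq_one_iff_adj.mpr (BS_adj_inl_inr.mpr hm)
  · simp only [hm, if_false]
    have hre : (BS G).Reachable (inl v) (inr e) := BS_preconnected hadj ht0 hf0 _ _
    obtain ⟨p, hp⟩ := hre.exists_walk_length_eq_dist
    have hpar := walk_parity p
    rw [hp] at hpar
    simp only [pc, Sum.elim_inl, Sum.elim_inr] at hpar
    have hne1 : (BS G).dist (inl v) (inr e) ≠ 1 := by
      intro hd
      obtain ⟨p', hp'⟩ := hre.exists_walk_length_eq_dist
      rw [hd] at hp'
      exact hm (BS_adj_inl_inr.mp (adj_of_walk_length_one p' hp'))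
    have hle : (BS G).dist (inl v) (inr e) ≤ 3 := by
      rcases cb : c v with _ | _
      · -- c v = false, walk v - mkE (eT e) v - eT e - e
        have h1 : (BS G).Adj (inl v) (inr (mkE hadj (eT_spec hadj e) cb)) :=
          BS_adj_inl_inr.mpr (mem_mkE_right hadj _ cb)
        have h2 : (BS G).Adj (inr (mkE hadj (eT_spec hadj e) cb)) (inl (eT hadj e)) :=
          BS_adj_inr_inl.mpr (mem_mkE_left hadj _ cb)
        have h3 : (BS G).Adj (inl (eT hadj e)) (inr e) :=
          BS_adj_inl_inr.mpr (eT_mem hadj e)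
        have := SimpleGraph.dist_le
          (SimpleGraph.Walk.cons h1 (SimpleGraph.Walk.cons h2 (SimpleGraph.Walk.cons h3 SimpleGraph.Walk.nil)))
        simpa using this
      · have h1 : (BS G).Adj (inl v) (inr (mkE hadj cb (eF_spec hadj e))) :=
          BS_adj_inl_inr.mpr (mem_mkE_left hadj cb _)
        have h2 : (BS G).Adj (inr (mkE hadj cb (eF_spec hadj e))) (inl (eF hadj e)) :=
          BS_adj_inr_inl.mpr (mem_mkE_right hadj cb _)
        have h3 : (BS G).Adj (inl (eF hadj e)) (inr e) :=
          BS_adj_inl_inr.mpr (eF_mem hadj e)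
        have := SimpleGraph.dist_le
          (SimpleGraph.Walk.cons h1 (SimpleGraph.Walk.cons h2 (SimpleGraph.Walk.cons h3 SimpleGraph.Walk.nil)))
        simpa using this
    omega

include hadj in
open scoped Classical in
lemma dist_inl_inl (ht0 : c t0 = true) (hf0 : c f0 = false) (u v : V) :
    (BS G).dist (inl u : V ⊕ G.edgeSet) (inl v) =
      if u = v then 0 else if c u = c v then 4 else 2 := by
  by_cases huv : u = v
  · simp [huv, SimpleGraph.dist_self]
  · simp only [huv, if_false]
    have hre : (BS G).Reachable (inl u : V ⊕ G.edgeSet) (inl v) :=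
      BS_preconnected hadj ht0 hf0 _ _
    obtain ⟨p, hp⟩ := hre.exists_walk_length_eq_dist
    have hpar := walk_parity p
    rw [hp] at hpar
    simp only [pc, Sum.elim_inl] at hpar
    have hpos : 0 < (BS G).dist (inl u : V ⊕ G.edgeSet) (inl v) :=
      hre.pos_dist_of_ne (by simp [huv])
    by_cases hc : c u = c v
    · simp only [hc, if_true]
      have hne2 : (BS G).dist (inl u : V ⊕ G.edgeSet) (inl v) ≠ 2 := by
        intro hd
        obtain ⟨p', hp'⟩ := hre.exists_walk_length_eq_dist
        rw [hd] at hp'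
        obtain ⟨z, hz1, hz2⟩ := mid_of_walk_length_two p' hp'
        rcases z with w | g
        · exact BS_not_adj_inl_inl hz1
        · have hu' := BS_adj_inl_inr.mp hz1
          have hv' := BS_adj_inr_inl.mp hz2
          rcases cb : c u with _ | _
          · have e1 := eq_eF_of_false hadj cb hu'
            have e2 := eq_eF_of_false hadj (by rw [← hc]; exact cb) hv'
            exact huv (e1.trans e2.symm)
          · have e1 := eq_eT_of_true hadj cb hu'
            have e2 := eq_eT_of_true hadj (by rw [← hc]; exact cb) hv'
            exact huv (e1.trans e2.symm)
      have hle : (BS G).dist (inl u : V ⊕ G.edgeSet) (inl v) ≤ 4 := by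
        rcases cb : c u with _ | _
        · have cbv : c v = false := by rw [← hc]; exact cb
          have h1 : (BS G).Adj (inl u) (inr (mkE hadj ht0 cb)) :=
            BS_adj_inl_inr.mpr (mem_mkE_right hadj ht0 cb)
          have h2 : (BS G).Adj (inr (mkE hadj ht0 cb)) (inl t0) :=
            BS_adj_inr_inl.mpr (mem_mkE_left hadj ht0 cb)
          have h3 : (BS G).Adj (inl t0) (inr (mkE hadj ht0 cbv)) :=
            BS_adj_inl_inr.mpr (mem_mkE_left hadj ht0 cbv)
          have h4 : (BS G).Adj (inr (mkE hadj ht0 cbv)) (inl v) :=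
            BS_adj_inr_inl.mpr (mem_mkE_right hadj ht0 cbv)
          have := SimpleGraph.dist_le (SimpleGraph.Walk.cons h1 (SimpleGraph.Walk.cons h2
            (SimpleGraph.Walk.cons h3 (SimpleGraph.Walk.cons h4 SimpleGraph.Walk.nil))))
          simpa using this
        · have cbv : c v = true := by rw [← hc]; exact cb
          have h1 : (BS G).Adj (inl u) (inr (mkE hadj cb hf0)) :=
            BS_adj_inl_inr.mpr (mem_mkE_left hadj cb hf0)
          have h2 : (BS G).Adj (inr (mkE hadj cb hf0)) (inl f0) :=
            BS_adj_inr_inl.mpr (mem_mkE_right hadj cb hf0)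
          have h3 : (BS G).Adj (inl f0) (inr (mkE hadj cbv hf0)) :=
            BS_adj_inl_inr.mpr (mem_mkE_right hadj cbv hf0)
          have h4 : (BS G).Adj (inr (mkE hadj cbv hf0)) (inl v) :=
            BS_adj_inr_inl.mpr (mem_mkE_left hadj cbv hf0)
          have := SimpleGraph.dist_le (SimpleGraph.Walk.cons h1 (SimpleGraph.Walk.cons h2
            (SimpleGraph.Walk.cons h3 (SimpleGraph.Walk.cons h4 SimpleGraph.Walk.nil))))
          simpa using this
      omega
    · simp only [hc, if_false]
      have hle : (BS G).dist (inl u : V ⊕ G.edgeSet) (inl v) ≤ 2 := by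
        rcases cb : c u with _ | _
        · have cbv : c v = true := by
            rcases cb2 : c v with _ | _
            · exact absurd (cb.trans cb2.symm) hc
            · rfl
          have h1 : (BS G).Adj (inl u) (inr (mkE hadj cbv cb)) :=
            BS_adj_inl_inr.mpr (mem_mkE_right hadj cbv cb)
          have h2 : (BS G).Adj (inr (mkE hadj cbv cb)) (inl v) :=
            BS_adj_inr_inl.mpr (mem_mkE_left hadj cbv cb)
          have := SimpleGraph.dist_le
            (SimpleGraph.Walk.cons h1 (SimpleGraph.Walk.cons h2 SimpleGraph.Walk.nil))
          simpa using this
        · have cbv : c v = false := by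
            rcases cb2 : c v with _ | _
            · rfl
            · exact absurd (cb.trans cb2.symm) hc
          have h1 : (BS G).Adj (inl u) (inr (mkE hadj cb cbv)) :=
            BS_adj_inl_inr.mpr (mem_mkE_left hadj cb cbv)
          have h2 : (BS G).Adj (inr (mkE hadj cb cbv)) (inl v) :=
            BS_adj_inr_inl.mpr (mem_mkE_right hadj cb cbv)
          have := SimpleGraph.dist_le
            (SimpleGraph.Walk.cons h1 (SimpleGraph.Walk.cons h2 SimpleGraph.Walk.nil))
          simpa using this
      omega

include hadj in
open scoped Classical in
lemma dist_inr_inr (ht0 : c t0 = true) (hf0 : c f0 = false) (e f : G.edgeSet) :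
    (BS G).dist (inr e : V ⊕ G.edgeSet) (inr f) =
      if e = f then 0 else
        if eT hadj e = eT hadj f ∨ eF hadj e = eF hadj f then 2 else 4 := by
  by_cases hef : e = f
  · simp [hef, SimpleGraph.dist_self]
  · simp only [hef, if_false]
    have hre : (BS G).Reachable (inr e : V ⊕ G.edgeSet) (inr f) :=
      BS_preconnected hadj ht0 hf0 _ _
    obtain ⟨p, hp⟩ := hre.exists_walk_length_eq_dist
    have hpar := walk_parity p
    rw [hp] at hpar
    simp only [pc, Sum.elim_inr] at hpar
    have hpos : 0 < (BS G).dist (inr e : V ⊕ G.edgeSet) (inr f) :=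
      hre.pos_dist_of_ne (by simp [hef])
    by_cases hsh : eT hadj e = eT hadj f ∨ eF hadj e = eF hadj f
    · simp only [hsh, if_true]
      have hle : (BS G).dist (inr e : V ⊕ G.edgeSet) (inr f) ≤ 2 := by
        rcases hsh with h | h
        · have h1 : (BS G).Adj (inr e) (inl (eT hadj e)) :=
            BS_adj_inr_inl.mpr (eT_mem hadj e)
          have h2 : (BS G).Adj (inl (eT hadj e)) (inr f) :=
            BS_adj_inl_inr.mpr (h ▸ eT_mem hadj f)
          have := SimpleGraph.dist_le
            (SimpleGraph.Walk.cons h1 (SimpleGraph.Walk.cons h2 SimpleGraph.Walk.nil))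
          simpa using this
        · have h1 : (BS G).Adj (inr e) (inl (eF hadj e)) :=
            BS_adj_inr_inl.mpr (eF_mem hadj e)
          have h2 : (BS G).Adj (inl (eF hadj e)) (inr f) :=
            BS_adj_inl_inr.mpr (h ▸ eF_mem hadj f)
          have := SimpleGraph.dist_le
            (SimpleGraph.Walk.cons h1 (SimpleGraph.Walk.cons h2 SimpleGraph.Walk.nil))
          simpa using this
      omega
    · simp only [hsh, if_false]
      push_neg at hsh
      have hne2 : (BS G).dist (inr e : V ⊕ G.edgeSet) (inr f) ≠ 2 := by
        intro hd
        obtain ⟨p', hp'⟩ := hre.exists_walk_length_eq_dist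
        rw [hd] at hp'
        obtain ⟨z, hz1, hz2⟩ := mid_of_walk_length_two p' hp'
        rcases z with w | g
        · have hm1 := BS_adj_inr_inl.mp hz1
          have hm2 := BS_adj_inl_inr.mp hz2
          rcases cb : c w with _ | _
          · exact hsh.2 ((eq_eF_of_false hadj cb hm1).symm.trans (eq_eF_of_false hadj cb hm2))
          · exact hsh.1 ((eq_eT_of_true hadj cb hm1).symm.trans (eq_eT_of_true hadj cb hm2))
        · exact BS_not_adj_inr_inr hz1
      have hle : (BS G).dist (inr e : V ⊕ G.edgeSet) (inr f) ≤ 4 := by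
        have h1 : (BS G).Adj (inr e) (inl (eT hadj e)) :=
          BS_adj_inr_inl.mpr (eT_mem hadj e)
        have h2 : (BS G).Adj (inl (eT hadj e)) (inr (mkE hadj (eT_spec hadj e) (eF_spec hadj f))) :=
          BS_adj_inl_inr.mpr (mem_mkE_left hadj _ _)
        have h3 : (BS G).Adj (inr (mkE hadj (eT_spec hadj e) (eF_spec hadj f))) (inl (eF hadj f)) :=
          BS_adj_inr_inl.mpr (mem_mkE_right hadj _ _)
        have h4 : (BS G).Adj (inl (eF hadj f)) (inr f) :=
          BS_adj_inl_inr.mpr (eF_mem hadj f)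
        have := SimpleGraph.dist_le (SimpleGraph.Walk.cons h1 (SimpleGraph.Walk.cons h2
          (SimpleGraph.Walk.cons h3 (SimpleGraph.Walk.cons h4 SimpleGraph.Walk.nil))))
        simpa using this
      omega

include hadj in
open scoped Classical in
lemma dist_eq_D (ht0 : c t0 = true) (hf0 : c f0 = false) (x y : V ⊕ G.edgeSet) :
    (BS G).dist x y = D hadj x y := by
  rcases x with u | e <;> rcases y with v | f
  · rw [dist_inl_inl hadj ht0 hf0]; rfl
  · rw [dist_inl_inr hadj ht0 hf0]; rfl
  · rw [SimpleGraph.dist_comm, dist_inl_inr hadj ht0 hf0]; rfl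
  · rw [dist_inr_inr hadj ht0 hf0]; rfl

section Counting

variable [Fintype V] [DecidableEq V] [Fintype G.edgeSet]

/-- the `true` class -/
def Afin (c : V → Bool) : Finset V := Finset.univ.filter (fun v => c v = true)

/-- the `false` class -/
def Bfin (c : V → Bool) : Finset V := Finset.univ.filter (fun v => c v = false)

variable (c) in
/-- vertices of the true class belonging to `W` -/
noncomputable def WAs (W : Finset (V ⊕ G.edgeSet)) : Finset V :=
  (Afin c).filter (fun a => (inl a : V ⊕ G.edgeSet) ∈ W)

variable (c) in
noncomputable def WBs (W : Finset (V ⊕ G.edgeSet)) : Finset V :=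
  (Bfin c).filter (fun b => (inl b : V ⊕ G.edgeSet) ∈ W)

/-- edges belonging to `W` -/
noncomputable def FEs (W : Finset (V ⊕ G.edgeSet)) : Finset G.edgeSet :=
  Finset.univ.filter (fun e => (inr e : V ⊕ G.edgeSet) ∈ W)

open scoped Classical in
noncomputable def Tset (W : Finset (V ⊕ G.edgeSet)) (a : V) : Finset G.edgeSet :=
  (FEs W).filter (fun e => a ∈ e.1)

lemma W_card_eq (W : Finset (V ⊕ G.edgeSet)) :
    W.card = (WAs c W).card + (WBs c W).card + (FEs W).card := by
  classical
  have hdecomp : W = ((WAs c W).image inl ∪ (WBs c W).image inl) ∪ (FEs W).image inr := by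
    ext x
    rcases x with v | e
    · simp only [Finset.mem_union, Finset.mem_image, WAs, WBs, FEs, Afin, Bfin,
        Finset.mem_filter, Finset.mem_univ, true_and, inl.injEq, reduceCtorEq,
        exists_eq_right, and_false, exists_false, or_false]
      rcases cb : c v with _ | _ <;> simp [cb]
    · simp only [Finset.mem_union, Finset.mem_image, WAs, WBs, FEs, Afin, Bfin,
        Finset.mem_filter, Finset.mem_univ, true_and, inr.injEq, reduceCtorEq,
        exists_eq_right, and_false, exists_false, false_or]
  have d1 : Disjoint ((WAs c W).image inl : Finset (V ⊕ G.edgeSet)) ((WBs c W).image inl) := by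
    rw [Finset.disjoint_left]
    rintro x hx hy
    simp only [Finset.mem_image, WAs, WBs, Afin, Bfin, Finset.mem_filter,
      Finset.mem_univ, true_and] at hx hy
    obtain ⟨a, ⟨ha1, -⟩, rfl⟩ := hx
    obtain ⟨b, ⟨hb1, -⟩, hb⟩ := hy
    rw [inl.injEq] at hb
    rw [hb] at hb1
    rw [ha1] at hb1
    cases hb1
  have d2 : Disjoint (((WAs c W).image inl ∪ (WBs c W).image inl : Finset (V ⊕ G.edgeSet))) ((FEs W).image inr) := by
    rw [Finset.disjoint_left]
    rintro x hx hy
    simp only [Finset.mem_union, Finset.mem_image] at hx hy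
    obtain ⟨e, -, rfl⟩ := hy
    rcases hx with ⟨a, -, h⟩ | ⟨a, -, h⟩ <;> cases h
  conv_lhs => rw [hdecomp]
  rw [Finset.card_union_of_disjoint d2, Finset.card_union_of_disjoint d1,
    Finset.card_image_of_injective _ Sum.inl_injective,
    Finset.card_image_of_injective _ Sum.inl_injective,
    Finset.card_image_of_injective _ Sum.inr_injective]

variable {t0 f0 : V}

open scoped Classical in
include hadj in
/-- forcing lemma for pairs in the true class -/
lemma forcing_A (ht0 : c t0 = true) (hf0 : c f0 = false)
    {W : Finset (V ⊕ G.edgeSet)} (hres : IsResolving (BS G) ↑W)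
    {a a' : V} (ha : c a = true) (ha' : c a' = true) (hne : a ≠ a')
    (hw : (inl a : V ⊕ G.edgeSet) ∉ W) (hw' : (inl a' : V ⊕ G.edgeSet) ∉ W) :
    Tset W a ≠ Tset W a' := by
  obtain ⟨w, hwW, hd⟩ := hres (inl a) (inl a') (by simp [hne])
  rw [dist_eq_D hadj ht0 hf0, dist_eq_D hadj ht0 hf0] at hd
  rcases w with z | g
  · exfalso
    have hza : a ≠ z := fun h => hw (h ▸ hwW)
    have hza' : a' ≠ z := fun h => hw' (h ▸ hwW)
    simp [D, hza, hza', ha, ha'] at hd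
  · intro hT
    have hg : g ∈ FEs W := by simp only [FEs, Finset.mem_filter, Finset.mem_univ, true_and]; exact hwW
    simp only [D] at hd
    by_cases hm : a ∈ g.1 <;> by_cases hm' : a' ∈ g.1
    · simp [hm, hm'] at hd
    · have : g ∈ Tset W a := by simp [Tset, hg, hm]
      rw [hT] at this
      simp [Tset, hm'] at this
    · have : g ∈ Tset W a' := by simp [Tset, hg, hm']
      rw [← hT] at this
      simp [Tset, hm] at this
    · simp [hm, hm'] at hd

open scoped Classical in
include hadj in
/-- forcing lemma for pairs in the false class -/
lemma forcing_B (ht0 : c t0 = true) (hf0 : c f0 = false)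
    {W : Finset (V ⊕ G.edgeSet)} (hres : IsResolving (BS G) ↑W)
    {b b' : V} (hb : c b = false) (hb' : c b' = false) (hne : b ≠ b')
    (hw : (inl b : V ⊕ G.edgeSet) ∉ W) (hw' : (inl b' : V ⊕ G.edgeSet) ∉ W) :
    Tset W b ≠ Tset W b' := by
  obtain ⟨w, hwW, hd⟩ := hres (inl b) (inl b') (by simp [hne])
  rw [dist_eq_D hadj ht0 hf0, dist_eq_D hadj ht0 hf0] at hd
  rcases w with z | g
  · exfalso
    have hza : b ≠ z := fun h => hw (h ▸ hwW)
    have hza' : b' ≠ z := fun h => hw' (h ▸ hwW)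
    simp [D, hza, hza', hb, hb'] at hd
  · intro hT
    have hg : g ∈ FEs W := by simp only [FEs, Finset.mem_filter, Finset.mem_univ, true_and]; exact hwW
    simp only [D] at hd
    by_cases hm : b ∈ g.1 <;> by_cases hm' : b' ∈ g.1
    · simp [hm, hm'] at hd
    · have : g ∈ Tset W b := by simp [Tset, hg, hm]
      rw [hT] at this
      simp [Tset, hm'] at this
    · have : g ∈ Tset W b' := by simp [Tset, hg, hm']
      rw [← hT] at this
      simp [Tset, hm] at this
    · simp [hm, hm'] at hd

end Counting

lemma mem_mkE_iff {u v z : V} (hu : c u = true) (hv : c v = false) :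
    z ∈ (mkE hadj hu hv).1 ↔ z = u ∨ z = v := by
  simp [mkE]

section Counting2

variable [Fintype V] [DecidableEq V] [Fintype G.edgeSet] {t0 f0 : V}

open scoped Classical in
include hadj in
lemma no_distinguisher (ht0 : c t0 = true) (hf0 : c f0 = false)
    {W : Finset (V ⊕ G.edgeSet)} (hres : IsResolving (BS G) ↑W)
    (x y : G.edgeSet) (hxy : x ≠ y)
    (hz : ∀ z : V, (inl z : V ⊕ G.edgeSet) ∈ W → (z ∈ x.1 ↔ z ∈ y.1))
    (hg : ∀ g ∈ FEs W, x ≠ g ∧ y ≠ g ∧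
      ((eT hadj x = eT hadj g ∨ eF hadj x = eF hadj g) ↔
       (eT hadj y = eT hadj g ∨ eF hadj y = eF hadj g))) : False := by
  obtain ⟨w, hwW, hd⟩ := hres (inr x) (inr y) (by simp [hxy])
  rw [dist_eq_D hadj ht0 hf0, dist_eq_D hadj ht0 hf0] at hd
  rcases w with z | g
  · have hiff := hz z hwW
    by_cases hm : z ∈ x.1
    · simp [D, hm, hiff.mp hm] at hd
    · have hm2 : z ∉ y.1 := fun h => hm (hiff.mpr h)
      simp [D, hm, hm2] at hd
  · have hgF : g ∈ FEs W := by
      simp only [FEs, Finset.mem_filter, Finset.mem_univ, true_and]; exact hwW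
    obtain ⟨hx1, hy1, hiff⟩ := hg g hgF
    by_cases hs : eT hadj x = eT hadj g ∨ eF hadj x = eF hadj g
    · simp [D, hx1, hy1, hs, hiff.mp hs] at hd
    · have hs2 : ¬(eT hadj y = eT hadj g ∨ eF hadj y = eF hadj g) := fun h => hs (hiff.mpr h)
      simp [D, hx1, hy1, hs, hs2] at hd

open scoped Classical in
include hadj in
theorem resolving_card_bound (ht0 : c t0 = true) (hf0 : c f0 = false)
    (hnm : (Afin c : Finset V).card + 2 ≤ 2 * (Bfin c : Finset V).card)
    {W : Finset (V ⊕ G.edgeSet)} (hres : IsResolving (BS G) ↑W) :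
    (Afin c : Finset V).card ≤ W.card := by
  by_contra hlt
  push_neg at hlt
  set n := (Afin c : Finset V).card with hn
  set m := (Bfin c : Finset V).card with hm
  -- decomposition of W
  have hcard := W_card_eq (c := c) W
  -- the A-side sets
  set P : Finset V := (Afin c).filter (fun a => (inl a : V ⊕ G.edgeSet) ∉ W) with hPdef
  have hP : (WAs c W).card + P.card = n := by
    rw [hn, hPdef, WAs]
    exact Finset.card_filter_add_card_filter_not _
  set Pne : Finset V := P.filter (fun a => (Tset W a).Nonempty) with hPnedef
  set P0 : Finset V := P.filter (fun a => ¬ (Tset W a).Nonempty) with hP0def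
  have hP2 : Pne.card + P0.card = P.card := by
    rw [hPnedef, hP0def]
    exact Finset.card_filter_add_card_filter_not _
  have hP0le : P0.card ≤ 1 := by
    rw [Finset.card_le_one]
    intro a ha b hb
    by_contra hab
    simp only [hP0def, hPdef, Finset.mem_filter, Afin, Finset.mem_univ, true_and,
      Finset.not_nonempty_iff_eq_empty] at ha hb
    exact forcing_A hadj ht0 hf0 hres ha.1.1 hb.1.1 hab ha.1.2 hb.1.2
      (ha.2.trans hb.2.symm)
  have hPneSub : Pne ⊆ (FEs W).image (eT hadj) := by
    intro a ha
    simp only [hPnedef, hPdef, Finset.mem_filter, Afin, Finset.mem_univ, true_and] at ha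
    obtain ⟨⟨haT, haW⟩, e, he⟩ := ha
    simp only [Tset, Finset.mem_filter] at he
    exact Finset.mem_image.mpr ⟨e, he.1, (eq_eT_of_true hadj haT he.2).symm⟩
  have hPne1 : Pne.card ≤ ((FEs W).image (eT hadj)).card := Finset.card_le_card hPneSub
  have hPne2 : ((FEs W).image (eT hadj)).card ≤ (FEs W).card := Finset.card_image_le
  -- main arithmetic on the A side
  have hWB0 : (WBs c W).card = 0 := by omega
  have hPne3 : Pne.card = (FEs W).card := by omega
  have hP0card : P0.card = 1 := by omega
  have himg : (FEs W).image (eT hadj) = Pne :=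
    (Finset.eq_of_subset_of_card_le hPneSub (by omega)).symm
  have hinj : Set.InjOn (eT hadj) (FEs W) :=
    Finset.injOn_of_card_image_eq (by omega)
  have hFnotW : ∀ g ∈ FEs W, (inl (eT hadj g) : V ⊕ G.edgeSet) ∉ W := by
    intro g hgF
    have : eT hadj g ∈ Pne := himg ▸ Finset.mem_image_of_mem _ hgF
    simp only [hPnedef, hPdef, Finset.mem_filter] at this
    exact this.1.2
  -- the special vertex a0
  obtain ⟨a0, ha0⟩ := Finset.card_eq_one.mp hP0card
  have ha0mem : a0 ∈ P0 := ha0 ▸ Finset.mem_singleton_self a0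
  have ha0A : c a0 = true := by
    simp only [hP0def, hPdef, Finset.mem_filter, Afin, Finset.mem_univ, true_and] at ha0mem
    exact ha0mem.1.1
  have ha0W : (inl a0 : V ⊕ G.edgeSet) ∉ W := by
    simp only [hP0def, hPdef, Finset.mem_filter, Afin, Finset.mem_univ, true_and] at ha0mem
    exact ha0mem.1.2
  have ha0T : ∀ g ∈ FEs W, a0 ∉ g.1 := by
    intro g hgF hmem
    simp only [hP0def, Finset.mem_filter, Finset.not_nonempty_iff_eq_empty] at ha0mem
    have : g ∈ Tset W a0 := by simp only [Tset, Finset.mem_filter]; exact ⟨hgF, hmem⟩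
    rw [ha0mem.2] at this
    simp at this
  -- B side
  have hWBempty : WBs c W = ∅ := Finset.card_eq_zero.mp hWB0
  have hBnotW : ∀ b, c b = false → (inl b : V ⊕ G.edgeSet) ∉ W := by
    intro b hb hbW
    have : b ∈ WBs c W := by
      simp only [WBs, Bfin, Finset.mem_filter, Finset.mem_univ, true_and]
      exact ⟨hb, hbW⟩
    rw [hWBempty] at this
    simp at this
  set B0 : Finset V := (Bfin c).filter (fun b => ¬ (Tset W b).Nonempty) with hB0def
  have hB0le : B0.card ≤ 1 := by
    rw [Finset.card_le_one]
    intro a ha b hb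
    by_contra hab
    simp only [hB0def, Finset.mem_filter, Bfin, Finset.mem_univ, true_and,
      Finset.not_nonempty_iff_eq_empty] at ha hb
    exact forcing_B hadj ht0 hf0 hres ha.1 hb.1 hab (hBnotW a ha.1) (hBnotW b hb.1)
      (ha.2.trans hb.2.symm)
  set Bend : Finset V := (FEs W).image (eF hadj) with hBenddef
  have hBsub : (Bfin c).filter (fun b => (Tset W b).Nonempty) ⊆ Bend := by
    intro b hb
    simp only [Finset.mem_filter, Bfin, Finset.mem_univ, true_and] at hb
    obtain ⟨hbF, e, he⟩ := hb
    simp only [Tset, Finset.mem_filter] at he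
    exact Finset.mem_image.mpr ⟨e, he.1, (eq_eF_of_false hadj hbF he.2).symm⟩
  have hBf : ((Bfin c).filter (fun b => (Tset W b).Nonempty)).card + B0.card = m := by
    rw [hB0def, hm]
    exact Finset.card_filter_add_card_filter_not _
  have hBend1 : m ≤ Bend.card + B0.card := by
    have := Finset.card_le_card hBsub
    omega
  -- multiplicity-one b's
  have hfib : (FEs W).card =
      ∑ b ∈ Bend, ((FEs W).filter (fun g => eF hadj g = b)).card :=
    Finset.card_eq_sum_card_image (eF hadj) (FEs W)
  set M1 : Finset V :=
    Bend.filter (fun b => ((FEs W).filter (fun g => eF hadj g = b)).card = 1) with hM1def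
  have hM1 : 2 * Bend.card ≤ (FEs W).card + M1.card := by
    have hM1card : M1.card =
        ∑ b ∈ Bend, if ((FEs W).filter (fun g => eF hadj g = b)).card = 1 then 1 else 0 := by
      rw [hM1def, Finset.card_filter]
    have hpt : ∀ b ∈ Bend,
        2 ≤ ((FEs W).filter (fun g => eF hadj g = b)).card +
          (if ((FEs W).filter (fun g => eF hadj g = b)).card = 1 then 1 else 0) := by
      intro b hb
      have hpos : 0 < ((FEs W).filter (fun g => eF hadj g = b)).card := by
        rw [Finset.card_pos]
        obtain ⟨g, hgF, hgb⟩ := Finset.mem_image.mp (hBenddef ▸ hb)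
        exact ⟨g, Finset.mem_filter.mpr ⟨hgF, hgb⟩⟩
      split <;> omega
    calc 2 * Bend.card = ∑ _b ∈ Bend, 2 := by
          rw [Finset.sum_const, smul_eq_mul, mul_comm]
      _ ≤ ∑ b ∈ Bend, (((FEs W).filter (fun g => eF hadj g = b)).card +
          (if ((FEs W).filter (fun g => eF hadj g = b)).card = 1 then 1 else 0)) :=
          Finset.sum_le_sum hpt
      _ = (FEs W).card + M1.card := by
          rw [Finset.sum_add_distrib, ← hfib, ← hM1card]
  -- the unique-edge extractor for elements of M1
  have hM1ex : ∀ b ∈ M1, ∃ e ∈ FEs W, eF hadj e = b ∧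
      ∀ g ∈ FEs W, eF hadj g = b → g = e := by
    intro b hb
    simp only [hM1def, Finset.mem_filter] at hb
    obtain ⟨e, he⟩ := Finset.card_eq_one.mp hb.2
    have heMem : e ∈ (FEs W).filter (fun g => eF hadj g = b) := he ▸ Finset.mem_singleton_self e
    rw [Finset.mem_filter] at heMem
    refine ⟨e, heMem.1, heMem.2, ?_⟩
    intro g hgF hgb
    have : g ∈ (FEs W).filter (fun g => eF hadj g = b) := Finset.mem_filter.mpr ⟨hgF, hgb⟩
    rw [he] at this
    exact Finset.mem_singleton.mp this
  have hM1B : ∀ b ∈ M1, c b = false := by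
    intro b hb
    simp only [hM1def, hBenddef, Finset.mem_filter, Finset.mem_image] at hb
    obtain ⟨⟨g, hgF, hgb⟩, -⟩ := hb
    rw [← hgb]
    exact eF_spec hadj g
  -- case analysis
  by_cases hB0e : B0.card = 0
  · -- every b is covered; at least two multiplicity-one b's
    have hM1two : 2 ≤ M1.card := by omega
    obtain ⟨b1, hb1, b2, hb2, hbne⟩ := Finset.one_lt_card.mp hM1two
    obtain ⟨e1, he1F, he1b, he1u⟩ := hM1ex b1 hb1
    obtain ⟨e2, he2F, he2b, he2u⟩ := hM1ex b2 hb2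
    have hcb1 : c b1 = false := hM1B b1 hb1
    have hcb2 : c b2 = false := hM1B b2 hb2
    have he12 : e1 ≠ e2 := fun h => hbne (he1b ▸ h ▸ he2b)
    set a1 := eT hadj e1 with ha1def
    set a2 := eT hadj e2 with ha2def
    have hca1 : c a1 = true := eT_spec hadj e1
    have hca2 : c a2 = true := eT_spec hadj e2
    have ha12 : a1 ≠ a2 := fun h => he12 (hinj he1F he2F h)
    set x : G.edgeSet := mkE hadj hca1 hcb2 with hxdef
    set y : G.edgeSet := mkE hadj hca2 hcb1 with hydef
    have hxT : eT hadj x = a1 := eT_mkE hadj hca1 hcb2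
    have hyT : eT hadj y = a2 := eT_mkE hadj hca2 hcb1
    have hxF : eF hadj x = b2 := eF_mkE hadj hca1 hcb2
    have hyF : eF hadj y = b1 := eF_mkE hadj hca2 hcb1
    have hxy : x ≠ y := fun h => ha12 (hxT ▸ h ▸ hyT)
    refine no_distinguisher hadj ht0 hf0 hres x y hxy ?_ ?_
    · intro z hzW
      have hcz : c z = true := by
        rcases hc : c z with _ | _
        · exact absurd hzW (hBnotW z hc)
        · rfl
      rw [hxdef, hydef, mem_mkE_iff hadj, mem_mkE_iff hadj]
      constructor
      · rintro (rfl | rfl)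
        · exact absurd hzW (hFnotW e1 he1F)
        · rw [hcb2] at hcz; cases hcz
      · rintro (rfl | rfl)
        · exact absurd hzW (hFnotW e2 he2F)
        · rw [hcb1] at hcz; cases hcz
    · intro g hgF
      have hxg : x ≠ g := by
        intro heq
        have hg1 : g = e1 := hinj hgF he1F (by rw [← heq, hxT])
        have hbb : b2 = b1 := by rw [← hxF, heq, hg1, he1b]
        exact hbne hbb.symm
      have hyg : y ≠ g := by
        intro heq
        have hg2 : g = e2 := hinj hgF he2F (by rw [← heq, hyT])
        have hbb : b1 = b2 := by rw [← hyF, heq, hg2, he2b]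
        exact hbne hbb
      refine ⟨hxg, hyg, ?_⟩
      rw [hxT, hxF, hyT, hyF]
      constructor
      · rintro (h | h)
        · have hg1 : e1 = g := hinj he1F hgF (ha1def.symm.trans h)
          right; rw [← hg1]; exact he1b.symm
        · have hg2 : g = e2 := he2u g hgF h.symm
          left; rw [hg2]
      · rintro (h | h)
        · have hg2 : e2 = g := hinj he2F hgF (ha2def.symm.trans h)
          right; rw [← hg2]; exact he2b.symm
        · have hg1 : g = e1 := he1u g hgF h.symm
          left; rw [hg1]
  · -- there is an uncovered b0 and at least one multiplicity-one b
    have hB0one : B0.card = 1 := by omega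
    obtain ⟨b0, hb0⟩ := Finset.card_eq_one.mp hB0one
    have hb0mem : b0 ∈ B0 := hb0 ▸ Finset.mem_singleton_self b0
    have hcb0 : c b0 = false := by
      simp only [hB0def, Finset.mem_filter, Bfin, Finset.mem_univ, true_and] at hb0mem
      exact hb0mem.1
    have hb0T : ∀ g ∈ FEs W, b0 ∉ g.1 := by
      intro g hgF hmem
      simp only [hB0def, Finset.mem_filter, Finset.not_nonempty_iff_eq_empty] at hb0mem
      have : g ∈ Tset W b0 := by simp only [Tset, Finset.mem_filter]; exact ⟨hgF, hmem⟩
      rw [hb0mem.2] at this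
      simp at this
    have hM1one : 1 ≤ M1.card := by omega
    obtain ⟨b1, hb1⟩ := Finset.card_pos.mp hM1one
    obtain ⟨e1, he1F, he1b, he1u⟩ := hM1ex b1 hb1
    have hcb1 : c b1 = false := hM1B b1 hb1
    set a1 := eT hadj e1 with ha1def
    have hca1 : c a1 = true := eT_spec hadj e1
    have hb01 : b0 ≠ b1 := by
      rintro rfl
      exact hb0T e1 he1F (he1b ▸ eF_mem hadj e1)
    have ha01 : a0 ≠ a1 := by
      rintro rfl
      exact ha0T e1 he1F (eT_mem hadj e1)
    set x : G.edgeSet := mkE hadj ha0A hcb1 with hxdef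
    set y : G.edgeSet := mkE hadj hca1 hcb0 with hydef
    have hxT : eT hadj x = a0 := eT_mkE hadj ha0A hcb1
    have hyT : eT hadj y = a1 := eT_mkE hadj hca1 hcb0
    have hxF : eF hadj x = b1 := eF_mkE hadj ha0A hcb1
    have hyF : eF hadj y = b0 := eF_mkE hadj hca1 hcb0
    have hxy : x ≠ y := fun h => ha01 (hxT ▸ h ▸ hyT)
    refine no_distinguisher hadj ht0 hf0 hres x y hxy ?_ ?_
    · intro z hzW
      have hcz : c z = true := by
        rcases hc : c z with _ | _
        · exact absurd hzW (hBnotW z hc)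
        · rfl
      rw [hxdef, hydef, mem_mkE_iff hadj, mem_mkE_iff hadj]
      constructor
      · rintro (rfl | rfl)
        · exact absurd hzW ha0W
        · rw [hcb1] at hcz; cases hcz
      · rintro (rfl | rfl)
        · exact absurd hzW (hFnotW e1 he1F)
        · rw [hcb0] at hcz; cases hcz
    · intro g hgF
      have hxg : x ≠ g := by
        intro heq
        refine ha0T g hgF ?_
        rw [← heq, hxdef]
        exact mem_mkE_left hadj ha0A hcb1
      have hyg : y ≠ g := by
        intro heq
        refine hb0T g hgF ?_
        rw [← heq, hydef]
        exact mem_mkE_right hadj hca1 hcb0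
      refine ⟨hxg, hyg, ?_⟩
      rw [hxT, hxF, hyT, hyF]
      constructor
      · rintro (h | h)
        · exact absurd (show a0 ∈ g.1 by rw [h]; exact eT_mem hadj g) (ha0T g hgF)
        · have hg1 : g = e1 := he1u g hgF h.symm
          left; rw [hg1]
      · rintro (h | h)
        · have hg1 : e1 = g := hinj he1F hgF (ha1def.symm.trans h)
          right; rw [← hg1]; exact he1b.symm
        · exact absurd (show b0 ∈ g.1 by rw [h]; exact eF_mem hadj g) (hb0T g hgF)

open scoped Classical in
include hadj in
theorem metricDim_ge (ht0 : c t0 = true) (hf0 : c f0 = false)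
    (hnm : (Afin c : Finset V).card + 2 ≤ 2 * (Bfin c : Finset V).card) :
    (Afin c : Finset V).card ≤ metricDim (BS G) := by
  have hresuniv : IsResolving (BS G) ↑(Finset.univ : Finset (V ⊕ G.edgeSet)) := by
    intro x y hxy
    refine ⟨x, by simp, ?_⟩
    rw [SimpleGraph.dist_self]
    intro h0
    exact SimpleGraph.dist_ne_zero_iff_ne_and_reachable.mpr
      ⟨hxy.symm, BS_preconnected hadj ht0 hf0 y x⟩ h0.symm
  have hne : {k | ∃ W : Finset (V ⊕ G.edgeSet), IsResolving (BS G) ↑W ∧ W.card = k}.Nonempty :=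
    ⟨Finset.univ.card, Finset.univ, hresuniv, rfl⟩
  obtain ⟨W, hW, hWc⟩ := Nat.sInf_mem hne
  rw [metricDim, ← hWc]
  exact resolving_card_bound hadj ht0 hf0 hnm hW

end Counting2

end Abstract

section Application

open Sum

lemma zmod_mul_eq_zero_iff {n : ℕ} [NeZero n] (x y : ZMod n) :
    x * y = 0 ↔ n ∣ x.val * y.val := by
  rw [← ZMod.val_eq_zero, ZMod.val_mul, Nat.dvd_iff_mod_eq_zero]

variable {p q : ℕ}

lemma zd_dvd (hp : p.Prime) (hq : q.Prime) (hpq : p ≠ q) [NeZero (p * q)]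
    (a : ZDVert (p * q)) :
    (p ∣ (a.1 : ZMod (p * q)).val ∧ ¬ q ∣ a.1.val) ∨
      (q ∣ a.1.val ∧ ¬ p ∣ a.1.val) := by
  obtain ⟨hne, b, hb, hab⟩ := a.2
  have hcop : Nat.Coprime p q := (Nat.coprime_primes hp hq).mpr hpq
  have hav : a.1.val ≠ 0 := fun h => hne ((ZMod.val_eq_zero a.1).mp h)
  have hbv : b.val ≠ 0 := fun h => hb ((ZMod.val_eq_zero b).mp h)
  have hdvd : p * q ∣ a.1.val * b.val := (zmod_mul_eq_zero_iff _ _).mp hab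
  have hnotboth : ∀ x : ZMod (p * q), x.val ≠ 0 → ¬(p ∣ x.val ∧ q ∣ x.val) := by
    rintro x hx ⟨h1, h2⟩
    exact hx (Nat.eq_zero_of_dvd_of_lt (Nat.Coprime.mul_dvd_of_dvd_of_dvd hcop h1 h2)
      (ZMod.val_lt x))
  by_cases hpa : p ∣ a.1.val
  · exact Or.inl ⟨hpa, fun hqa => hnotboth a.1 hav ⟨hpa, hqa⟩⟩
  · right
    have hpd : p ∣ a.1.val * b.val := dvd_trans ⟨q, rfl⟩ hdvd
    have hpb : p ∣ b.val := ((Nat.Prime.dvd_mul hp).mp hpd).resolve_left hpa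
    have hqd : q ∣ a.1.val * b.val := dvd_trans ⟨p, mul_comm p q⟩ hdvd
    rcases (Nat.Prime.dvd_mul hq).mp hqd with h | h
    · exact ⟨h, hpa⟩
    · exact absurd ⟨hpb, h⟩ (hnotboth b hbv)

lemma zd_adj_iff (hp : p.Prime) (hq : q.Prime) (hpq : p ≠ q) [NeZero (p * q)]
    (a b : ZDVert (p * q)) :
    (zdGraph (p * q)).Adj a b ↔
      (decide (p ∣ a.1.val) : Bool) ≠ decide (p ∣ b.1.val) := by
  constructor
  · rintro ⟨hne, h0⟩
    have hdvd := (zmod_mul_eq_zero_iff _ _).mp h0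
    intro hdec
    have hiff : p ∣ a.1.val ↔ p ∣ b.1.val := by
      simpa [decide_eq_decide] using hdec
    rcases zd_dvd hp hq hpq a with ⟨ha1, ha2⟩ | ⟨ha1, ha2⟩ <;>
      rcases zd_dvd hp hq hpq b with ⟨hb1, hb2⟩ | ⟨hb1, hb2⟩
    · have hqd : q ∣ a.1.val * b.1.val := dvd_trans ⟨p, mul_comm p q⟩ hdvd
      rcases (Nat.Prime.dvd_mul hq).mp hqd with h | h
      · exact ha2 h
      · exact hb2 h
    · exact hb2 (hiff.mp ha1)
    · exact ha2 (hiff.mpr hb1)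
    · have hpd : p ∣ a.1.val * b.1.val := dvd_trans ⟨q, rfl⟩ hdvd
      rcases (Nat.Prime.dvd_mul hp).mp hpd with h | h
      · exact ha2 h
      · exact hb2 h
  · intro hdec
    have hne : a ≠ b := fun h => hdec (by rw [h])
    have hiff : ¬(p ∣ a.1.val ↔ p ∣ b.1.val) := fun h => hdec (decide_eq_decide.mpr h)
    refine ⟨hne, (zmod_mul_eq_zero_iff _ _).mpr ?_⟩
    by_cases hpa : p ∣ a.1.val
    · have hpb : ¬ p ∣ b.1.val := fun h => hiff ⟨fun _ => h, fun _ => hpa⟩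
      have hqb : q ∣ b.1.val :=
        ((zd_dvd hp hq hpq b).resolve_left (fun h => absurd h.1 hpb)).1
      exact mul_dvd_mul hpa hqb
    · have hpb : p ∣ b.1.val := by
        by_contra h
        exact hiff ⟨fun h' => absurd h' hpa, fun h' => absurd h' h⟩
      have hqa : q ∣ a.1.val :=
        ((zd_dvd hp hq hpq a).resolve_left (fun h => absurd h.1 hpa)).1
      rw [mul_comm (ZMod.val a.1)]
      exact mul_dvd_mul hpb hqa

end Application

section Application2

def mkZD {n : ℕ} (x : ZMod n) (h1 : x ≠ 0) (h2 : ∃ b : ZMod n, b ≠ 0 ∧ x * b = 0) :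
    ZDVert n := ⟨x, h1, h2⟩

variable {p q : ℕ}

lemma val_lemma [NeZero (p * q)] {k : ℕ} (hk : k < q) :
    ((p * k : ℕ) : ZMod (p * q)).val = p * k := by
  have hp0 : 0 < p := by
    rcases Nat.eq_zero_or_pos p with h | h
    · exfalso; have := NeZero.ne (p * q); simp [h] at this
    · exact h
  exact ZMod.val_cast_of_lt (by exact Nat.mul_lt_mul_of_le_of_lt (le_refl p) hk hp0)

lemma q_ne_zero [NeZero (p * q)] (hp2 : 2 ≤ p) (hq1 : 1 ≤ q) :
    ((q : ℕ) : ZMod (p * q)) ≠ 0 := by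
  have hlt : q < p * q := by nlinarith
  intro h
  have := (ZMod.val_eq_zero _).mpr h
  rw [ZMod.val_cast_of_lt hlt] at this
  omega

lemma hvertA [NeZero (p * q)] (hp2 : 2 ≤ p) {k : ℕ} (hk : k < q) (hk0 : 0 < k) :
    ((p * k : ℕ) : ZMod (p * q)) ≠ 0 ∧
      ∃ b : ZMod (p * q), b ≠ 0 ∧ ((p * k : ℕ) : ZMod (p * q)) * b = 0 := by
  have hq1 : 1 ≤ q := by omega
  constructor
  · intro h
    have := (ZMod.val_eq_zero _).mpr h
    rw [val_lemma hk] at this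
    have : p * k ≠ 0 := by positivity
    omega
  · refine ⟨((q : ℕ) : ZMod (p * q)), q_ne_zero hp2 hq1, ?_⟩
    rw [← Nat.cast_mul, show p * k * q = k * (p * q) by ring, Nat.cast_mul,
      ZMod.natCast_self, mul_zero]

lemma p_not_dvd (hp : p.Prime) (hq : q.Prime) (hpq : p ≠ q) {l : ℕ}
    (hl0 : 0 < l) (hlp : l < p) : ¬ p ∣ q * l := by
  intro h
  rcases (Nat.Prime.dvd_mul hp).mp h with h1 | h1
  · exact hpq ((Nat.prime_dvd_prime_iff_eq hp hq).mp h1)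
  · have := Nat.le_of_dvd hl0 h1
    omega

lemma val_lemmaB [NeZero (p * q)] {l : ℕ} (hl : l < p) :
    ((q * l : ℕ) : ZMod (p * q)).val = q * l := by
  have hq0 : 0 < q := by
    rcases Nat.eq_zero_or_pos q with h | h
    · exfalso; have := NeZero.ne (p * q); simp [h] at this
    · exact h
  refine ZMod.val_cast_of_lt ?_
  calc q * l < q * p := Nat.mul_lt_mul_of_le_of_lt (le_refl q) hl hq0
    _ = p * q := mul_comm q p

lemma p_ne_zero' [NeZero (p * q)] (hq2 : 2 ≤ q) (hp1 : 1 ≤ p) :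
    ((p : ℕ) : ZMod (p * q)) ≠ 0 := by
  have hlt : p < p * q := by nlinarith
  intro h
  have := (ZMod.val_eq_zero _).mpr h
  rw [ZMod.val_cast_of_lt hlt] at this
  omega

lemma hvertB [NeZero (p * q)] (hq2 : 2 ≤ q) {l : ℕ} (hl : l < p) (hl0 : 0 < l) :
    ((q * l : ℕ) : ZMod (p * q)) ≠ 0 ∧
      ∃ b : ZMod (p * q), b ≠ 0 ∧ ((q * l : ℕ) : ZMod (p * q)) * b = 0 := by
  have hp1 : 1 ≤ p := by omega
  constructor
  · intro h
    have := (ZMod.val_eq_zero _).mpr h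
    rw [val_lemmaB hl] at this
    have : q * l ≠ 0 := by positivity
    omega
  · refine ⟨((p : ℕ) : ZMod (p * q)), p_ne_zero' hq2 hp1, ?_⟩
    rw [← Nat.cast_mul, show q * l * p = l * (p * q) by ring, Nat.cast_mul,
      ZMod.natCast_self, mul_zero]

end Application2

section Application3

variable {p q : ℕ}

lemma cardA (hp : p.Prime) (hq : q.Prime) (hpq : p ≠ q) [NeZero (p * q)]
    [Fintype (ZDVert (p * q))] :
    (Afin (fun a : ZDVert (p * q) => decide (p ∣ a.1.val))).card = q - 1 := by
  have hp2 := hp.two_le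
  have hq2 := hq.two_le
  have hp0 : 0 < p := by omega
  rw [Afin, show q - 1 = (Finset.range (q - 1)).card from (Finset.card_range _).symm]
  refine Finset.card_bij' (fun a _ => a.1.val / p - 1)
    (fun k hk => mkZD ((p * (k + 1) : ℕ) : ZMod (p * q))
      (hvertA hp2 (by have := Finset.mem_range.mp hk; omega) (Nat.succ_pos k)).1
      (hvertA hp2 (by have := Finset.mem_range.mp hk; omega) (Nat.succ_pos k)).2)
    ?_ ?_ ?_ ?_
  · intro a ha
    simp only [Finset.mem_filter, Finset.mem_univ, true_and, decide_eq_true_eq] at ha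
    obtain ⟨j0, hj0⟩ := ha
    have hne : a.1.val ≠ 0 := fun h => a.2.1 ((ZMod.val_eq_zero _).mp h)
    have hlt : a.1.val < p * q := ZMod.val_lt _
    have hj0pos : 0 < j0 := by
      rcases Nat.eq_zero_or_pos j0 with h | h
      · rw [h, mul_zero] at hj0; exact absurd hj0 hne
      · exact h
    have hjq : j0 < q := by
      rw [hj0] at hlt
      exact Nat.lt_of_mul_lt_mul_left hlt
    show a.1.val / p - 1 ∈ Finset.range (q - 1)
    rw [Finset.mem_range, hj0, Nat.mul_div_cancel_left _ hp0]
    omega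
  · intro k hk
    have hk' : k + 1 < q := by have := Finset.mem_range.mp hk; omega
    simp only [Finset.mem_filter, Finset.mem_univ, true_and, decide_eq_true_eq]
    show p ∣ ((p * (k + 1) : ℕ) : ZMod (p * q)).val
    rw [val_lemma hk']
    exact ⟨k + 1, rfl⟩
  · intro a ha
    simp only [Finset.mem_filter, Finset.mem_univ, true_and, decide_eq_true_eq] at ha
    obtain ⟨j0, hj0⟩ := ha
    have hne : a.1.val ≠ 0 := fun h => a.2.1 ((ZMod.val_eq_zero _).mp h)
    have hj0pos : 0 < j0 := by
      rcases Nat.eq_zero_or_pos j0 with h | h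
      · rw [h, mul_zero] at hj0; exact absurd hj0 hne
      · exact h
    refine Subtype.ext ?_
    show ((p * ((a.1.val / p - 1) + 1) : ℕ) : ZMod (p * q)) = a.1
    have heq : p * ((a.1.val / p - 1) + 1) = a.1.val := by
      rw [hj0, Nat.mul_div_cancel_left _ hp0]
      have : (j0 - 1) + 1 = j0 := by omega
      rw [this]
    rw [heq]
    exact ZMod.natCast_rightInverse a.1
  · intro k hk
    have hk' : k + 1 < q := by have := Finset.mem_range.mp hk; omega
    show (mkZD ((p * (k + 1) : ℕ) : ZMod (p * q)) _ _).1.val / p - 1 = k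
    simp only [mkZD]
    rw [val_lemma hk', Nat.mul_div_cancel_left _ hp0]
    omega

lemma cardB (hp : p.Prime) (hq : q.Prime) (hpq : p ≠ q) [NeZero (p * q)]
    [Fintype (ZDVert (p * q))] :
    (Bfin (fun a : ZDVert (p * q) => decide (p ∣ a.1.val))).card = p - 1 := by
  have hp2 := hp.two_le
  have hq2 := hq.two_le
  have hq0 : 0 < q := by omega
  rw [Bfin, show p - 1 = (Finset.range (p - 1)).card from (Finset.card_range _).symm]
  refine Finset.card_bij' (fun a _ => a.1.val / q - 1)
    (fun l hl => mkZD ((q * (l + 1) : ℕ) : ZMod (p * q))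
      (hvertB hq2 (by have := Finset.mem_range.mp hl; omega) (Nat.succ_pos l)).1
      (hvertB hq2 (by have := Finset.mem_range.mp hl; omega) (Nat.succ_pos l)).2)
    ?_ ?_ ?_ ?_
  · intro a ha
    simp only [Finset.mem_filter, Finset.mem_univ, true_and, decide_eq_false_iff_not] at ha
    have hqa : q ∣ a.1.val := ((zd_dvd hp hq hpq a).resolve_left (fun h => absurd h.1 ha)).1
    obtain ⟨j0, hj0⟩ := hqa
    have hne : a.1.val ≠ 0 := fun h => a.2.1 ((ZMod.val_eq_zero _).mp h)
    have hlt : a.1.val < p * q := ZMod.val_lt _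
    have hj0pos : 0 < j0 := by
      rcases Nat.eq_zero_or_pos j0 with h | h
      · rw [h, mul_zero] at hj0; exact absurd hj0 hne
      · exact h
    have hjp : j0 < p := by
      rw [hj0, mul_comm p q] at hlt
      exact Nat.lt_of_mul_lt_mul_left hlt
    show a.1.val / q - 1 ∈ Finset.range (p - 1)
    rw [Finset.mem_range, hj0, Nat.mul_div_cancel_left _ hq0]
    omega
  · intro l hl
    have hl' : l + 1 < p := by have := Finset.mem_range.mp hl; omega
    simp only [Finset.mem_filter, Finset.mem_univ, true_and, decide_eq_false_iff_not]
    show ¬ p ∣ ((q * (l + 1) : ℕ) : ZMod (p * q)).val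
    rw [val_lemmaB hl']
    exact p_not_dvd hp hq hpq (Nat.succ_pos l) hl'
  · intro a ha
    simp only [Finset.mem_filter, Finset.mem_univ, true_and, decide_eq_false_iff_not] at ha
    have hqa : q ∣ a.1.val := ((zd_dvd hp hq hpq a).resolve_left (fun h => absurd h.1 ha)).1
    obtain ⟨j0, hj0⟩ := hqa
    have hne : a.1.val ≠ 0 := fun h => a.2.1 ((ZMod.val_eq_zero _).mp h)
    have hj0pos : 0 < j0 := by
      rcases Nat.eq_zero_or_pos j0 with h | h
      · rw [h, mul_zero] at hj0; exact absurd hj0 hne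
      · exact h
    refine Subtype.ext ?_
    show ((q * ((a.1.val / q - 1) + 1) : ℕ) : ZMod (p * q)) = a.1
    have heq : q * ((a.1.val / q - 1) + 1) = a.1.val := by
      rw [hj0, Nat.mul_div_cancel_left _ hq0]
      have : (j0 - 1) + 1 = j0 := by omega
      rw [this]
    rw [heq]
    exact ZMod.natCast_rightInverse a.1
  · intro l hl
    have hl' : l + 1 < p := by have := Finset.mem_range.mp hl; omega
    show (mkZD ((q * (l + 1) : ℕ) : ZMod (p * q)) _ _).1.val / q - 1 = l
    simp only [mkZD]
    rw [val_lemmaB hl', Nat.mul_div_cancel_left _ hq0]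
    omega

end Application3

theorem stmt3 (p q : ℕ) (hp : p.Prime) (hq : q.Prime) (hop : Odd p) (hoq : Odd q)
    (hpq : p ≠ q) (hp5 : 5 ≤ p) (h1 : p + 1 < q) (h2 : q < 2 * p - 1) :
    metricDim (BS (zdGraph (p * q))) > q - 2 := by
  have hp2 := hp.two_le
  have hq2 := hq.two_le
  haveI : NeZero (p * q) := ⟨Nat.mul_ne_zero (by omega) (by omega)⟩
  haveI hfin : Finite (ZDVert (p * q)) := by unfold ZDVert; infer_instance
  letI : Fintype (ZDVert (p * q)) := Fintype.ofFinite _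
  letI : DecidableEq (ZDVert (p * q)) := Classical.decEq _
  letI : Fintype (zdGraph (p * q)).edgeSet := Fintype.ofFinite _
  have hadj : ∀ u v : ZDVert (p * q), (zdGraph (p * q)).Adj u v ↔
      (fun a : ZDVert (p * q) => decide (p ∣ a.1.val)) u ≠
        (fun a : ZDVert (p * q) => decide (p ∣ a.1.val)) v :=
    fun u v => zd_adj_iff hp hq hpq u v
  have hvA := hvertA (p := p) (q := q) hp2 (show (1 : ℕ) < q by omega) one_pos
  have hvB := hvertB (p := p) (q := q) hq2 (show (1 : ℕ) < p by omega) one_pos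
  have ht0 : (fun a : ZDVert (p * q) => decide (p ∣ a.1.val))
      (mkZD ((p * 1 : ℕ) : ZMod (p * q)) hvA.1 hvA.2) = true := by
    show decide (p ∣ ((p * 1 : ℕ) : ZMod (p * q)).val) = true
    rw [val_lemma (show (1 : ℕ) < q by omega)]
    simp
  have hf0 : (fun a : ZDVert (p * q) => decide (p ∣ a.1.val))
      (mkZD ((q * 1 : ℕ) : ZMod (p * q)) hvB.1 hvB.2) = false := by
    show decide (p ∣ ((q * 1 : ℕ) : ZMod (p * q)).val) = false
    rw [val_lemmaB (show (1 : ℕ) < p by omega)]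
    exact decide_eq_false (p_not_dvd hp hq hpq one_pos (by omega))
  have hA := cardA hp hq hpq
  have hB := cardB hp hq hpq
  obtain ⟨tq, htq⟩ := hoq
  have hnm : (Afin (fun a : ZDVert (p * q) => decide (p ∣ a.1.val))).card + 2 ≤
      2 * (Bfin (fun a : ZDVert (p * q) => decide (p ∣ a.1.val))).card := by
    rw [hA, hB]
    omega
  have hmain := metricDim_ge hadj ht0 hf0 hnm
  rw [hA] at hmain
  omega
end
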